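/- arXiv:1701.07051 — 5 statements merged into one kernel-verified Lean document; each statement's English description precedes it below -/
import Mathlib

section
/- Let G be a finite directed acyclic graph with a unique source s, and let N = (I - A)^{-1} be the path-counting matrix. Then vertex j dominates vertex k if and only if N_{sk} = N_{sj} · N_{jk}. -/
/-!
For a 0/1 matrix `A`, `(A ^ m) j k` counts the paths of length `m` from `j` to `k`; if moreover
`A ^ M = 0` then `(1 - A)⁻¹ = ∑ m < M, A ^ m`, so `N j k` counts all
paths from `j` to `k`, where `N = (1 - A)⁻¹`.
Nilpotency also rules out cycles (a cycle could be pumped into arbitrarily long paths), so a path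
visits `j` at most once and concatenation is a bijection from pairs of paths `s → j`, `j → k`
onto the paths `s → k` through `j`. Hence `N s j * N j k` counts the paths `s → k` through `j`,
and it equals `N s k` iff every path `s → k` passes through `j`.
-/

/-- `l` is the list of successive vertices (after `j`) of a directed path from `j` to `k`. -/
def IsPathList {n : ℕ} (A : Matrix (Fin n) (Fin n) ℚ) (j k : Fin n) (l : List (Fin n)) : Prop :=
  List.Chain (fun a b => A a b = 1) j l ∧ (j :: l).getLast (List.cons_ne_nil _ _) = k

/-- `j` dominates `k` (with respect to the source `s`): every path from `s` to `k`
passes through `j`. -/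
def Dominates {n : ℕ} (A : Matrix (Fin n) (Fin n) ℚ) (s j k : Fin n) : Prop :=
  ∀ l : List (Fin n), IsPathList A s k l → j ∈ s :: l

open Finset

theorem Matrix.inv_one_sub_eq_sum_pow {ι R : Type*} [Fintype ι] [DecidableEq ι] [CommRing R]
    {A : Matrix ι ι R} {M : ℕ} (hM : A ^ M = 0) :
    (1 - A)⁻¹ = ∑ m ∈ range M, A ^ m :=
  Matrix.inv_eq_right_inv (by rw [mul_neg_geom_sum, hM, sub_zero])

section Paths

variable {n : ℕ} {A : Matrix (Fin n) (Fin n) ℚ}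

theorem isPathList_iff {j k : Fin n} {l : List (Fin n)} :
    IsPathList A j k l ↔
      (j :: l).IsChain (fun a b => A a b = 1) ∧ (j :: l).getLast (List.cons_ne_nil _ _) = k :=
  Iff.rfl

@[simp]
theorem isPathList_nil {j k : Fin n} : IsPathList A j k [] ↔ j = k := by
  simp [isPathList_iff]

@[simp]
theorem isPathList_cons {j k u : Fin n} {l : List (Fin n)} :
    IsPathList A j k (u :: l) ↔ A j u = 1 ∧ IsPathList A u k l := by
  simp [isPathList_iff, List.isChain_cons_cons, and_assoc]

theorem isPathList_append {a c : Fin n} {p q : List (Fin n)} :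
    IsPathList A a c (p ++ q) ↔ ∃ b, IsPathList A a b p ∧ IsPathList A b c q := by
  induction p generalizing a with
  | nil => simp
  | cons u p ih => simp [ih, and_assoc]

theorem IsPathList.append {a b c : Fin n} {p q : List (Fin n)}
    (hp : IsPathList A a b p) (hq : IsPathList A b c q) : IsPathList A a c (p ++ q) :=
  isPathList_append.2 ⟨b, hp, hq⟩

theorem IsPathList.split {a b c : Fin n} {p q : List (Fin n)}
    (h : IsPathList A a c (p ++ b :: q)) :
    IsPathList A a b (p ++ [b]) ∧ IsPathList A b c q := by
  obtain ⟨b', hp, hq⟩ := isPathList_append.1 (p.append_cons b q ▸ h)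
  obtain rfl : b' = b := by simpa using hp.2.symm
  exact ⟨hp, hq⟩

theorem IsPathList.eq_dropLast_append {a b : Fin n} {p : List (Fin n)}
    (hp : IsPathList A a b p) : a :: p = (a :: p).dropLast ++ [b] :=
  hp.2 ▸ (List.dropLast_append_getLast _).symm

theorem IsPathList.cons_append_eq {a b : Fin n} {p : List (Fin n)} (hp : IsPathList A a b p)
    (q : List (Fin n)) : a :: (p ++ q) = (a :: p).dropLast ++ b :: q := by
  simpa using congrArg (· ++ q) hp.eq_dropLast_append

def pathsOfLength (A : Matrix (Fin n) (Fin n) ℚ) : ℕ → Fin n → Fin n → Finset (List (Fin n))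
  | 0, j, k => if j = k then {[]} else ∅
  | m + 1, j, k =>
      (univ.filter (A j · = 1)).biUnion fun u =>
        (pathsOfLength A m u k).map ⟨List.cons u, List.cons_injective⟩

theorem mem_pathsOfLength {m : ℕ} {j k : Fin n} {l : List (Fin n)} :
    l ∈ pathsOfLength A m j k ↔ IsPathList A j k l ∧ l.length = m := by
  induction m generalizing j l with
  | zero => by_cases h : j = k <;> cases l <;> simp [pathsOfLength, h]
  | succ m ih => cases l <;> simp [pathsOfLength, ih, and_assoc]

theorem card_pathsOfLength (h01 : ∀ j k, A j k = 0 ∨ A j k = 1) (m : ℕ) (j k : Fin n) :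
    (#(pathsOfLength A m j k) : ℚ) = (A ^ m) j k := by
  induction m generalizing j with
  | zero => by_cases h : j = k <;> simp [pathsOfLength, h]
  | succ m ih =>
    rw [pathsOfLength, card_biUnion, pow_succ', Matrix.mul_apply]
    · push_cast
      rw [sum_filter]
      refine sum_congr rfl fun u _ => ?_
      rcases h01 j u with h | h <;> simp [h, ih]
    · intro u _ v _ huv
      simp [disjoint_left, huv.symm]

theorem IsPathList.length_lt (h01 : ∀ j k, A j k = 0 ∨ A j k = 1) {M : ℕ} (hM : A ^ M = 0)
    {j k : Fin n} {l : List (Fin n)} (hp : IsPathList A j k l) : l.length < M := by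
  by_contra! hle
  have hl : l ∈ pathsOfLength A l.length j k := mem_pathsOfLength.2 ⟨hp, rfl⟩
  have hcard := card_pathsOfLength h01 l.length j k
  rw [pow_eq_zero_of_le hle hM, Matrix.zero_apply, Nat.cast_eq_zero, card_eq_zero] at hcard
  simp [hcard] at hl

theorem IsPathList.notMem (h01 : ∀ j k, A j k = 0 ∨ A j k = 1) {M : ℕ} (hM : A ^ M = 0)
    {j k : Fin n} {l : List (Fin n)} (hp : IsPathList A j k l) : j ∉ l := by
  intro hj
  obtain ⟨p, q, rfl⟩ := List.append_of_mem hj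
  have hcycle : IsPathList A j j (p ++ [j]) := hp.split.1
  have hpump : ∀ m, ∃ c, IsPathList A j j c ∧ m ≤ c.length := by
    intro m
    induction m with
    | zero => exact ⟨[], by simp, le_rfl⟩
    | succ m ih =>
      obtain ⟨c, hc, hlen⟩ := ih
      exact ⟨_, hcycle.append hc, by simp; omega⟩
  obtain ⟨c, hc, hlen⟩ := hpump M
  exact (hc.length_lt h01 hM).not_ge hlen

theorem IsPathList.nodup (h01 : ∀ j k, A j k = 0 ∨ A j k = 1) {M : ℕ} (hM : A ^ M = 0)
    {j k : Fin n} {l : List (Fin n)} (hp : IsPathList A j k l) : (j :: l).Nodup := by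
  induction l generalizing j with
  | nil => simp
  | cons u l ih => exact List.nodup_cons.2 ⟨hp.notMem h01 hM, ih (isPathList_cons.1 hp).2⟩

/-- All paths from `j` to `k` once `A ^ M = 0`, since then every path is shorter than `M`. -/
def paths (A : Matrix (Fin n) (Fin n) ℚ) (M : ℕ) (j k : Fin n) : Finset (List (Fin n)) :=
  (range M).biUnion (pathsOfLength A · j k)

theorem mem_paths (h01 : ∀ j k, A j k = 0 ∨ A j k = 1) {M : ℕ} (hM : A ^ M = 0)
    {j k : Fin n} {l : List (Fin n)} : l ∈ paths A M j k ↔ IsPathList A j k l := by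
  simp only [paths, mem_biUnion, mem_range, mem_pathsOfLength]
  exact ⟨fun ⟨_, _, hp, _⟩ => hp, fun hp => ⟨_, hp.length_lt h01 hM, hp, rfl⟩⟩

theorem card_paths (h01 : ∀ j k, A j k = 0 ∨ A j k = 1) {M : ℕ} (hM : A ^ M = 0) (j k : Fin n) :
    (#(paths A M j k) : ℚ) = (1 - A)⁻¹ j k := by
  rw [paths, card_biUnion, Matrix.inv_one_sub_eq_sum_pow hM, Matrix.sum_apply]
  · push_cast
    exact sum_congr rfl fun m _ => card_pathsOfLength h01 m j k
  · intro m₁ _ m₂ _ hm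
    exact disjoint_left.2 fun l h₁ h₂ =>
      hm ((mem_pathsOfLength.1 h₁).2.symm.trans (mem_pathsOfLength.1 h₂).2)

theorem injOn_append_paths (h01 : ∀ j k, A j k = 0 ∨ A j k = 1) {M : ℕ} (hM : A ^ M = 0)
    (s j k : Fin n) :
    Set.InjOn (fun pq : List (Fin n) × List (Fin n) => pq.1 ++ pq.2)
      (paths A M s j ×ˢ paths A M j k : Finset _) := by
  rintro ⟨p, q⟩ hpq ⟨p', q'⟩ hpq' heq
  simp only [coe_product, Set.mem_prod, mem_coe, mem_paths h01 hM] at hpq hpq' heq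
  obtain ⟨hp, hq⟩ := hpq
  have hsplit := hp.cons_append_eq q
  have hnd := (hp.append hq).nodup h01 hM
  rw [hsplit] at hnd
  have hjx : j ∉ (s :: p).dropLast := fun h =>
    List.disjoint_of_nodup_append hnd h List.mem_cons_self
  have hjq : j ∉ q := (List.nodup_cons.1 hnd.of_append_right).1
  obtain ⟨hx, -, rfl⟩ := (List.append_cons_inj_of_notMem hjx hjq).1
    (hsplit.symm.trans (heq ▸ hpq'.1.cons_append_eq q'))
  have : s :: p = s :: p' := by rw [hp.eq_dropLast_append, hpq'.1.eq_dropLast_append, hx]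
  simpa using this

theorem image_append_paths (h01 : ∀ j k, A j k = 0 ∨ A j k = 1) {M : ℕ} (hM : A ^ M = 0)
    (s j k : Fin n) :
    (paths A M s j ×ˢ paths A M j k).image (fun pq => pq.1 ++ pq.2) =
      {l ∈ paths A M s k | j ∈ s :: l} := by
  ext l
  simp only [mem_image, mem_product, mem_filter, mem_paths h01 hM, Prod.exists]
  constructor
  · rintro ⟨p, q, ⟨hp, hq⟩, rfl⟩
    refine ⟨hp.append hq, ?_⟩
    rw [hp.cons_append_eq q]
    exact List.mem_append_right _ List.mem_cons_self
  · rintro ⟨hl, hj⟩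
    obtain ⟨_ | ⟨_, x⟩, q, hxq⟩ := List.append_of_mem hj
    · obtain ⟨rfl, rfl⟩ := List.cons_eq_cons.1 hxq
      exact ⟨[], l, ⟨by simp, hl⟩, rfl⟩
    · obtain ⟨rfl, rfl⟩ := List.cons_eq_cons.1 hxq
      exact ⟨x ++ [j], q, hl.split, by simp⟩

theorem card_paths_product (h01 : ∀ j k, A j k = 0 ∨ A j k = 1) {M : ℕ} (hM : A ^ M = 0)
    (s j k : Fin n) :
    #(paths A M s j ×ˢ paths A M j k) = #{l ∈ paths A M s k | j ∈ s :: l} := by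
  rw [← image_append_paths h01 hM, card_image_of_injOn (injOn_append_paths h01 hM s j k)]

end Paths

theorem stmt1_general {n : ℕ} (A : Matrix (Fin n) (Fin n) ℚ)
    (h01 : ∀ j k, A j k = 0 ∨ A j k = 1) (hnil : IsNilpotent A) (s : Fin n) :
    ∀ j k, Dominates A s j k ↔ (1 - A)⁻¹ s k = (1 - A)⁻¹ s j * (1 - A)⁻¹ j k := by
  intro j k
  obtain ⟨M, hM⟩ := hnil
  rw [← card_paths h01 hM, ← card_paths h01 hM, ← card_paths h01 hM, ← Nat.cast_mul,
    ← card_product, card_paths_product h01 hM, Nat.cast_inj, eq_comm, card_filter_eq_iff]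
  simp only [Dominates, mem_paths h01 hM]

/-- In a finite DAG with a unique source `s`, with `N = (I - A)⁻¹` the path-counting
matrix, vertex `j` dominates vertex `k` iff `N s k = N s j * N j k`. -/
theorem stmt1 {n : ℕ} (A : Matrix (Fin n) (Fin n) ℚ)
    (h01 : ∀ j k, A j k = 0 ∨ A j k = 1) (hnil : IsNilpotent A) (s : Fin n)
    (hs : ∀ u, A u s = 0) (hunique : ∀ v, (∀ u, A u v = 0) → v = s) :
    ∀ j k, Dominates A s j k ↔ (1 - A)⁻¹ s k = (1 - A)⁻¹ s j * (1 - A)⁻¹ j k :=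
  stmt1_general A h01 hnil s
end

section
/- In a digraph G with a designated source s, the dominance relation restricted to the set of vertices reachable from s is a partial order: it is reflexive, transitive, and antisymmetric. -/
/-- `p` is a directed path starting at `s` in the digraph with edge relation `E`. -/
def IsPathFrom {V : Type*} (E : V → V → Prop) (s : V) (p : List V) : Prop :=
  p.head? = some s ∧ p.Chain' E

/-- `v` is reachable from `s`. -/
def Reaches {V : Type*} (E : V → V → Prop) (s v : V) : Prop :=
  ∃ p : List V, IsPathFrom E s p ∧ p.getLast? = some v

/-- `j` dominates `k` (w.r.t. source `s`): every directed path from `s` to `k` passes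
through `j`. -/
def Dom {V : Type*} (E : V → V → Prop) (s j k : V) : Prop :=
  ∀ p : List V, IsPathFrom E s p → p.getLast? = some k → j ∈ p

/-!
Reflexivity and transitivity only need that a path through `j` can be cut off at `j`.
For antisymmetry, cut a path from `s` to `k` at the first occurrence of `j`: the prefix must
contain `k`, and cutting once more at `k` yields a path to `k` that avoids `j`.
-/

theorem List.exists_eq_append_cons_not_mem {α : Type*} {a : α} {l : List α} (h : a ∈ l) :
    ∃ l₁ l₂, l = l₁ ++ a :: l₂ ∧ a ∉ l₁ := by
  induction l with
  | nil => cases h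
  | cons b l ih =>
    by_cases hab : a = b
    · exact ⟨[], l, by rw [hab, List.nil_append], List.not_mem_nil⟩
    · obtain ⟨l₁, l₂, rfl, ha⟩ := ih (List.mem_of_ne_of_mem hab h)
      exact ⟨b :: l₁, l₂, rfl, List.not_mem_cons_of_ne_of_not_mem hab ha⟩

section

variable {V : Type*} {E : V → V → Prop} {s : V}

theorem IsPathFrom.truncate {a : V} {l₁ l₂ : List V} (hp : IsPathFrom E s (l₁ ++ a :: l₂)) :
    IsPathFrom E s (l₁ ++ [a]) := by
  obtain ⟨hhead, hchain⟩ := hp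
  refine ⟨?_, hchain.prefix ⟨l₂, by simp⟩⟩
  cases l₁ <;> simpa using hhead

theorem Dom.mem_of_isPathFrom {j k : V} {l₁ l₂ : List V} (h : Dom E s j k)
    (hp : IsPathFrom E s (l₁ ++ k :: l₂)) : j ∈ l₁ ++ [k] :=
  h _ hp.truncate (by simp)

theorem dom_refl (k : V) : Dom E s k k := fun _ _ hlast =>
  List.mem_of_getLast? hlast

theorem Dom.trans {i j k : V} (hij : Dom E s i j) (hjk : Dom E s j k) : Dom E s i k := by
  intro p hp hlast
  obtain ⟨l₁, l₂, rfl⟩ := List.append_of_mem (hjk p hp hlast)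
  rcases List.mem_append.mp (hij.mem_of_isPathFrom hp) with hi | hi
  · exact List.mem_append_left _ hi
  · rw [List.mem_singleton.mp hi]
    exact List.mem_append_right _ List.mem_cons_self

theorem Dom.antisymm {j k : V} (hk : Reaches E s k) (hjk : Dom E s j k) (hkj : Dom E s k j) :
    j = k := by
  by_contra hne
  obtain ⟨p, hp, hlast⟩ := hk
  obtain ⟨l₁, l₂, rfl, hj⟩ := List.exists_eq_append_cons_not_mem (hjk p hp hlast)
  have hk₁ : k ∈ l₁ := by
    simpa [Ne.symm hne] using hkj.mem_of_isPathFrom hp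
  obtain ⟨m₁, m₂, rfl⟩ := List.append_of_mem hk₁
  have hp' : IsPathFrom E s (m₁ ++ k :: (m₂ ++ j :: l₂)) := by simpa using hp
  have hj₁ : j ∈ m₁ := by
    simpa [hne] using hjk.mem_of_isPathFrom hp'
  exact hj (List.mem_append_left _ hj₁)

end

theorem stmt3_general {V : Type*} (E : V → V → Prop) (s : V) :
    (∀ k, Reaches E s k → Dom E s k k) ∧
    (∀ i j k, Reaches E s i → Reaches E s j → Reaches E s k →
      Dom E s i j → Dom E s j k → Dom E s i k) ∧
    (∀ j k, Reaches E s j → Reaches E s k → Dom E s j k → Dom E s k j → j = k) :=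
  ⟨fun k _ => dom_refl k, fun _ _ _ _ _ _ => Dom.trans, fun _ _ _ hk => Dom.antisymm hk⟩

/-- In a finite digraph with designated source `s`, the dominance relation restricted to
the vertices reachable from `s` is reflexive, transitive, and antisymmetric. -/
theorem stmt3 {V : Type*} [Fintype V] (E : V → V → Prop) (s : V) :
    (∀ k, Reaches E s k → Dom E s k k) ∧
    (∀ i j k, Reaches E s i → Reaches E s j → Reaches E s k →
      Dom E s i j → Dom E s j k → Dom E s i k) ∧
    (∀ j k, Reaches E s j → Reaches E s k → Dom E s j k → Dom E s k j → j = k) :=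
  stmt3_general E s
end

section
/- The stretching transformation on flow graphs is confluent and idempotent: the cumulative result of applying the four local vertex-splitting transformations to all interior vertices is independent of the order of application, and no interior vertex of the resulting graph satisfies the hypotheses of any of the four transformations. -/
/-- A finite digraph on a finite set of natural-number vertices (loops allowed). -/
structure NGraph where
  verts : Finset ℕ
  edges : Finset (ℕ × ℕ)

/-- Number of incoming non-loop edges at `v`. -/
def din (G : NGraph) (v : ℕ) : ℕ := (G.edges.filter (fun e => e.2 = v ∧ e.1 ≠ v)).card

/-- Number of outgoing non-loop edges at `v`. -/
def dout (G : NGraph) (v : ℕ) : ℕ := (G.edges.filter (fun e => e.1 = v ∧ e.2 ≠ v)).card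

/-- `v` carries a loop. -/
def hasLoop (G : NGraph) (v : ℕ) : Prop := (v, v) ∈ G.edges

/-- One of the four local splitting transformations applies at `v`. -/
def Applicable (G : NGraph) (v : ℕ) : Prop :=
  (din G v = 1 ∧ 1 < dout G v ∧ hasLoop G v) ∨
  (1 < din G v ∧ dout G v = 1 ∧ hasLoop G v) ∨
  (1 < din G v ∧ 1 < dout G v ∧ ¬hasLoop G v) ∨
  (1 < din G v ∧ 1 < dout G v ∧ hasLoop G v)

/-- Case 1 split at `v` (d⁺ = 1, d⁻ > 1, loop): `v` becomes `vs` (receiving the incoming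
edge and the loop) and `vt` (emitting the outgoing edges), with a new edge `vs → vt`. -/
def Split1 (G : NGraph) (v : ℕ) (G' : NGraph) : Prop :=
  din G v = 1 ∧ 1 < dout G v ∧ hasLoop G v ∧
  ∃ vs vt : ℕ, vs ∉ G.verts ∧ vt ∉ G.verts ∧ vs ≠ vt ∧
    G'.verts = insert vs (insert vt (G.verts.erase v)) ∧
    G'.edges = insert (vs, vt) (G.edges.image (fun e =>
      if e.1 = v ∧ e.2 = v then (vs, vs)
      else (if e.1 = v then vt else e.1, if e.2 = v then vs else e.2)))

/-- Case 2 split at `v` (d⁺ > 1, d⁻ = 1, loop): `vs` receives the incoming edges, `vt`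
emits the outgoing edge and holds the loop, with a new edge `vs → vt`. -/
def Split2 (G : NGraph) (v : ℕ) (G' : NGraph) : Prop :=
  1 < din G v ∧ dout G v = 1 ∧ hasLoop G v ∧
  ∃ vs vt : ℕ, vs ∉ G.verts ∧ vt ∉ G.verts ∧ vs ≠ vt ∧
    G'.verts = insert vs (insert vt (G.verts.erase v)) ∧
    G'.edges = insert (vs, vt) (G.edges.image (fun e =>
      if e.1 = v ∧ e.2 = v then (vt, vt)
      else (if e.1 = v then vt else e.1, if e.2 = v then vs else e.2)))

/-- Case 3 split at `v` (d⁺ > 1, d⁻ > 1, no loop): `vs` receives the incoming edges,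
`vt` emits the outgoing edges, with a new edge `vs → vt`. -/
def Split3 (G : NGraph) (v : ℕ) (G' : NGraph) : Prop :=
  1 < din G v ∧ 1 < dout G v ∧ ¬hasLoop G v ∧
  ∃ vs vt : ℕ, vs ∉ G.verts ∧ vt ∉ G.verts ∧ vs ≠ vt ∧
    G'.verts = insert vs (insert vt (G.verts.erase v)) ∧
    G'.edges = insert (vs, vt) (G.edges.image (fun e =>
      (if e.1 = v then vt else e.1, if e.2 = v then vs else e.2)))

/-- Case 4 split at `v` (d⁺ > 1, d⁻ > 1, loop): `vs` receives the incoming edges, `v'`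
holds the loop, `vt` emits the outgoing edges, with new edges `vs → v'` and `v' → vt`. -/
def Split4 (G : NGraph) (v : ℕ) (G' : NGraph) : Prop :=
  1 < din G v ∧ 1 < dout G v ∧ hasLoop G v ∧
  ∃ vs v' vt : ℕ, vs ∉ G.verts ∧ v' ∉ G.verts ∧ vt ∉ G.verts ∧
    vs ≠ v' ∧ vs ≠ vt ∧ v' ≠ vt ∧
    G'.verts = insert vs (insert v' (insert vt (G.verts.erase v))) ∧
    G'.edges = insert (vs, v') (insert (v', vt) (G.edges.image (fun e =>
      if e.1 = v ∧ e.2 = v then (v', v')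
      else (if e.1 = v then vt else e.1, if e.2 = v then vs else e.2))))

/-- One stretching step: apply one of the four transformations at some interior vertex
(i.e. a vertex other than the source `s` and the target `t`). -/
def Step (s t : ℕ) (G G' : NGraph) : Prop :=
  ∃ v ∈ G.verts, v ≠ s ∧ v ≠ t ∧
    (Split1 G v G' ∨ Split2 G v G' ∨ Split3 G v G' ∨ Split4 G v G')

/-- No transformation applies at any interior vertex. -/
def NormalForm (s t : ℕ) (G : NGraph) : Prop :=
  ∀ v ∈ G.verts, v ≠ s → v ≠ t → ¬Applicable G v

/-- Digraph isomorphism. -/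
def NIso (G G' : NGraph) : Prop :=
  ∃ φ : ℕ → ℕ, Set.BijOn φ (G.verts : Set ℕ) (G'.verts : Set ℕ) ∧
    ∀ a ∈ G.verts, ∀ b ∈ G.verts, ((a, b) ∈ G.edges ↔ (φ a, φ b) ∈ G'.edges)

/-- `p` is a path from `s` to `t` in `G`. -/
def NSTPath (G : NGraph) (s t : ℕ) (p : List ℕ) : Prop :=
  p.head? = some s ∧ p.getLast? = some t ∧ p.Chain' (fun a b => (a, b) ∈ G.edges)

/-- `G` is a flow graph with source `s` and target `t`. -/
def NIsFlowGraph (G : NGraph) (s t : ℕ) : Prop :=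
  (∀ e ∈ G.edges, e.1 ∈ G.verts ∧ e.2 ∈ G.verts) ∧
  s ∈ G.verts ∧ t ∈ G.verts ∧
  (∀ v ∈ G.verts, (∀ u, u ≠ v → (u, v) ∉ G.edges) ↔ v = s) ∧
  (∀ v ∈ G.verts, (∀ u, u ≠ v → (v, u) ∉ G.edges) ↔ v = t) ∧
  (∃! x, (s, x) ∈ G.edges) ∧ (∃! x, (x, t) ∈ G.edges) ∧
  (∀ v ∈ G.verts, ∃ p : List ℕ, NSTPath G s t p ∧ v ∈ p)

/-!
Call a vertex splittable if one of the four transformations applies to it. Splitting a vertex `v`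
leaves the in-degree, out-degree and loop of every other vertex unchanged, and none of the two or
three new vertices is splittable. So a step consumes exactly one splittable vertex and creates
none: reductions terminate, and the splittable vertices of every intermediate graph are those of
`G` not yet split. Every reduction therefore ends, up to isomorphism, in the canonical stretch of
`G`, where each splittable vertex `u` is replaced by a gadget on `3u, 3u + 1, 3u + 2` and every
other vertex `u` by `3u`: a single step changes the stretch only by renaming the gadget of the
split vertex, and a graph in normal form is its own stretch. Source and sink of a flow graph have
no incoming resp. outgoing edges, hence are not splittable, so all splittable vertices are
interior.
-/

namespace Finset

theorem biUnion_eq_union_erase {α β : Type*} [DecidableEq α] [DecidableEq β] {s : Finset α}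
    {a : α} {t : α → Finset β} (ha : a ∈ s) : s.biUnion t = t a ∪ (s.erase a).biUnion t := by
  rw [← biUnion_insert, insert_erase ha]

theorem exists_notMem_ne {α : Type*} [Infinite α] [DecidableEq α] (s : Finset α) (a b : α) :
    ∃ w ∉ s, a ≠ w ∧ w ≠ b := by
  obtain ⟨w, hw⟩ := exists_notMem (insert a (insert b s))
  simp only [mem_insert, not_or] at hw
  exact ⟨w, hw.2.2, Ne.symm hw.1, hw.2.1⟩

end Finset

namespace NGraph

open Finset

def WellFormed (G : NGraph) : Prop := ∀ e ∈ G.edges, e.1 ∈ G.verts ∧ e.2 ∈ G.verts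

theorem ext {G H : NGraph} (hV : G.verts = H.verts) (hE : G.edges = H.edges) : G = H := by
  cases G; cases H; simp_all

theorem _root_.NIso.symm {G H : NGraph} (h : NIso G H) : NIso H G := by
  obtain ⟨φ, hbij, hiff⟩ := h
  have hinv := hbij.invOn_invFunOn
  have hbij' := hbij.symm hinv.symm
  refine ⟨Function.invFunOn φ G.verts, hbij', fun a ha b hb => ?_⟩
  rw [hiff _ (hbij'.mapsTo ha) _ (hbij'.mapsTo hb), hinv.2 ha, hinv.2 hb]

theorem _root_.NIso.trans {G H K : NGraph} (h₁ : NIso G H) (h₂ : NIso H K) : NIso G K := by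
  obtain ⟨φ, hφ, hiff₁⟩ := h₁
  obtain ⟨ψ, hψ, hiff₂⟩ := h₂
  refine ⟨ψ ∘ φ, hψ.comp hφ, fun a ha b hb => ?_⟩
  rw [hiff₁ _ ha _ hb, hiff₂ _ (hφ.mapsTo ha) _ (hφ.mapsTo hb)]
  rfl

theorem nIso_of_image {G H : NGraph} {φ : ℕ → ℕ} (hG : G.WellFormed) (hφ : Set.InjOn φ G.verts)
    (hV : G.verts.image φ = H.verts) (hE : G.edges.image (Prod.map φ φ) = H.edges) : NIso G H := by
  refine ⟨φ, ⟨fun x hx => ?_, hφ, fun y hy => ?_⟩, fun a ha b hb => ⟨fun hab => ?_, fun hab => ?_⟩⟩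
  · rw [mem_coe, ← hV]; exact mem_image_of_mem φ hx
  · rw [mem_coe, ← hV] at hy
    obtain ⟨x, hx, rfl⟩ := mem_image.mp hy
    exact ⟨x, hx, rfl⟩
  · rw [← hE]; exact mem_image_of_mem _ hab
  · rw [← hE] at hab
    obtain ⟨⟨c, d⟩, hcd, hφcd⟩ := mem_image.mp hab
    simp only [Prod.map, Prod.mk.injEq] at hφcd
    obtain ⟨hc, hd⟩ := hG _ hcd
    rwa [← hφ hc ha hφcd.1, ← hφ hd hb hφcd.2]

def splitKind (G : NGraph) (v : ℕ) : ℕ :=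
  if din G v = 1 ∧ 1 < dout G v ∧ (v, v) ∈ G.edges then 1
  else if 1 < din G v ∧ dout G v = 1 ∧ (v, v) ∈ G.edges then 2
  else if 1 < din G v ∧ 1 < dout G v ∧ (v, v) ∉ G.edges then 3
  else if 1 < din G v ∧ 1 < dout G v ∧ (v, v) ∈ G.edges then 4
  else 0

theorem splitKind_ne_zero_iff {G : NGraph} {v : ℕ} : splitKind G v ≠ 0 ↔ Applicable G v := by
  unfold splitKind Applicable hasLoop
  split_ifs <;> simp_all

theorem splitKind_congr {G H : NGraph} {v u : ℕ} (hin : din G v = din H u)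
    (hout : dout G v = dout H u) (hloop : (v, v) ∈ G.edges ↔ (u, u) ∈ H.edges) :
    splitKind G v = splitKind H u := by
  simp only [splitKind, hin, hout, hloop]

section Kinds

variable {G : NGraph} {v : ℕ}

theorem splitKind_eq_one (h : din G v = 1 ∧ 1 < dout G v ∧ hasLoop G v) : splitKind G v = 1 := by
  unfold splitKind; unfold hasLoop at h; split_ifs; rfl

theorem splitKind_eq_two (h : 1 < din G v ∧ dout G v = 1 ∧ hasLoop G v) : splitKind G v = 2 := by
  unfold splitKind; unfold hasLoop at h; split_ifs <;> simp_all

theorem splitKind_eq_three (h : 1 < din G v ∧ 1 < dout G v ∧ ¬hasLoop G v) :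
    splitKind G v = 3 := by
  unfold splitKind; unfold hasLoop at h; split_ifs <;> simp_all

theorem splitKind_eq_four (h : 1 < din G v ∧ 1 < dout G v ∧ hasLoop G v) : splitKind G v = 4 := by
  unfold splitKind; unfold hasLoop at h; split_ifs <;> simp_all

theorem splitKind_eq_zero_of_dout_le_one (hout : dout G v ≤ 1)
    (hloop : dout G v = 1 → (v, v) ∈ G.edges → din G v ≤ 1) : splitKind G v = 0 := by
  unfold splitKind; split_ifs <;> grind

theorem splitKind_eq_zero_of_din_le_one (hin : din G v ≤ 1)
    (hloop : din G v = 1 → (v, v) ∈ G.edges → dout G v ≤ 1) : splitKind G v = 0 := by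
  unfold splitKind; split_ifs <;> grind

end Kinds

/-- A split vertex of kind `k` becomes the path `a → b → c`, where `a`, `b`, `c` play the roles
of `v_s`, `v'`, `v_t` and `b` is present only for kind 4; `loopSlot` is the vertex receiving the
loop. -/
def gadgetVerts (k a b c : ℕ) : Finset ℕ := if k = 4 then {a, b, c} else {a, c}

def gadgetEdges (k a b c : ℕ) : Finset (ℕ × ℕ) := if k = 4 then {(a, b), (b, c)} else {(a, c)}

def loopSlot (k a b c : ℕ) : ℕ := if k = 2 then c else if k = 4 then b else a

section Gadget

variable {k a b c x : ℕ}

theorem mem_gadgetVerts (hx : x ∈ gadgetVerts k a b c) : x = a ∨ x = b ∨ x = c := by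
  unfold gadgetVerts at hx
  split_ifs at hx <;> simp only [mem_insert, mem_singleton] at hx <;> tauto

theorem gadgetVerts_mem_of_mem_gadgetEdges {e : ℕ × ℕ} (he : e ∈ gadgetEdges k a b c) :
    e.1 ∈ gadgetVerts k a b c ∧ e.2 ∈ gadgetVerts k a b c := by
  unfold gadgetEdges at he
  unfold gadgetVerts
  split_ifs at he ⊢ <;> simp only [mem_insert, mem_singleton] at he <;>
    rcases he with rfl | rfl <;> simp

theorem fst_ne_snd_of_mem_gadgetEdges {e : ℕ × ℕ} (hab : a ≠ b) (hac : a ≠ c) (hbc : b ≠ c)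
    (he : e ∈ gadgetEdges k a b c) : e.1 ≠ e.2 := by
  unfold gadgetEdges at he
  split_ifs at he <;> simp only [mem_insert, mem_singleton] at he <;> grind

theorem loopSlot_eq (k a b c : ℕ) :
    loopSlot k a b c = a ∨ loopSlot k a b c = b ∨ loopSlot k a b c = c := by
  unfold loopSlot; split_ifs <;> simp

theorem apply_loopSlot (f : ℕ → ℕ) (k a b c : ℕ) :
    f (loopSlot k a b c) = loopSlot k (f a) (f b) (f c) := by
  unfold loopSlot; split_ifs <;> rfl

theorem image_gadgetVerts (f : ℕ → ℕ) (k a b c : ℕ) :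
    (gadgetVerts k a b c).image f = gadgetVerts k (f a) (f b) (f c) := by
  unfold gadgetVerts; split_ifs <;> simp [image_insert]

theorem image_gadgetEdges (f : ℕ → ℕ) (k a b c : ℕ) :
    (gadgetEdges k a b c).image (Prod.map f f) = gadgetEdges k (f a) (f b) (f c) := by
  unfold gadgetEdges; split_ifs <;> simp [image_insert]

theorem card_gadgetEdges_in_le_one :
    #((gadgetEdges k a b c).filter fun e => e.2 = x ∧ e.1 ≠ x) ≤ 1 := by
  refine card_le_one.mpr fun e he f hf => ?_
  unfold gadgetEdges at he hf
  split_ifs at he hf <;> simp only [mem_filter, mem_insert, mem_singleton] at he hf <;> grind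

theorem card_gadgetEdges_out_le_one :
    #((gadgetEdges k a b c).filter fun e => e.1 = x ∧ e.2 ≠ x) ≤ 1 := by
  refine card_le_one.mpr fun e he f hf => ?_
  unfold gadgetEdges at he hf
  split_ifs at he hf <;> simp only [mem_filter, mem_insert, mem_singleton] at he hf <;> grind

theorem card_gadgetEdges_in_eq_zero (hb : x ≠ b) (hc : x ≠ c) :
    #((gadgetEdges k a b c).filter fun e => e.2 = x ∧ e.1 ≠ x) = 0 := by
  rw [card_eq_zero, filter_eq_empty_iff]
  unfold gadgetEdges
  split_ifs <;> simp only [mem_insert, mem_singleton] <;> grind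

theorem card_gadgetEdges_out_eq_zero (ha : x ≠ a) (hb : x ≠ b) :
    #((gadgetEdges k a b c).filter fun e => e.1 = x ∧ e.2 ≠ x) = 0 := by
  rw [card_eq_zero, filter_eq_empty_iff]
  unfold gadgetEdges
  split_ifs <;> simp only [mem_insert, mem_singleton] <;> grind

end Gadget

theorem din_le_one_of_loopSlot_eq_first {G : NGraph} {v a b c : ℕ} (hk : splitKind G v ≠ 0)
    (hne : a ≠ b ∧ a ≠ c) (hl : loopSlot (splitKind G v) a b c = a) (hv : (v, v) ∈ G.edges) :
    din G v ≤ 1 := by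
  unfold loopSlot splitKind at *; split_ifs at * <;> grind

theorem dout_le_one_of_loopSlot_eq_last {G : NGraph} {v a b c : ℕ} (hk : splitKind G v ≠ 0)
    (hne : a ≠ c ∧ b ≠ c) (hl : loopSlot (splitKind G v) a b c = c) (hv : (v, v) ∈ G.edges) :
    dout G v ≤ 1 := by
  unfold loopSlot splitKind at *; split_ifs at * <;> grind

def splitEdge (v vs vt l : ℕ) (e : ℕ × ℕ) : ℕ × ℕ :=
  if e.1 = v ∧ e.2 = v then (l, l)
  else (if e.1 = v then vt else e.1, if e.2 = v then vs else e.2)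

def split (G : NGraph) (v vs w vt : ℕ) : NGraph where
  verts := gadgetVerts (splitKind G v) vs w vt ∪ G.verts.erase v
  edges := gadgetEdges (splitKind G v) vs w vt ∪
    G.edges.image (splitEdge v vs vt (loopSlot (splitKind G v) vs w vt))

theorem splitEdge_loop (v vs vt l a : ℕ) :
    splitEdge v vs vt l (a, a) = (if a = v then l else a, if a = v then l else a) := by
  unfold splitEdge; split_ifs <;> simp_all

theorem splitEdge_of_ne {v vs vt l a b : ℕ} (hab : a ≠ b) :
    splitEdge v vs vt l (a, b) = (if a = v then vt else a, if b = v then vs else b) :=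
  if_neg fun h => hab (h.1.trans h.2.symm)

theorem split_verts {G : NGraph} {v vs w vt : ℕ} :
    (G.split v vs w vt).verts = gadgetVerts (splitKind G v) vs w vt ∪ G.verts.erase v := rfl

theorem split_edges {G : NGraph} {v vs w vt : ℕ} :
    (G.split v vs w vt).edges = gadgetEdges (splitKind G v) vs w vt ∪
      G.edges.image (splitEdge v vs vt (loopSlot (splitKind G v) vs w vt)) := rfl

theorem mem_split_verts {G : NGraph} {v vs w vt x : ℕ} :
    x ∈ (G.split v vs w vt).verts ↔ x ∈ gadgetVerts (splitKind G v) vs w vt ∨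
      (x ≠ v ∧ x ∈ G.verts) := by
  simp [split]

section SplitShape

variable {G : NGraph} {v vs w vt : ℕ}

theorem split_of_splitKind_ne_four (hk : splitKind G v ≠ 4) :
    G.split v vs w vt = ⟨insert vs (insert vt (G.verts.erase v)),
      insert (vs, vt) (G.edges.image (splitEdge v vs vt (loopSlot (splitKind G v) vs w vt)))⟩ :=
  ext (by simp [split_verts, gadgetVerts, hk]) (by simp [split_edges, gadgetEdges, hk])

theorem split_of_splitKind_eq_four (hk : splitKind G v = 4) :
    G.split v vs w vt = ⟨insert vs (insert w (insert vt (G.verts.erase v))),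
      insert (vs, w) (insert (w, vt) (G.edges.image (splitEdge v vs vt w)))⟩ :=
  ext (by simp [split_verts, gadgetVerts, hk]) (by simp [split_edges, gadgetEdges, hk, loopSlot])

end SplitShape

theorem image_splitEdge_of_loop_notMem {G : NGraph} {v vs vt l : ℕ} (hv : (v, v) ∉ G.edges) :
    G.edges.image (splitEdge v vs vt l) =
      G.edges.image fun e => (if e.1 = v then vt else e.1, if e.2 = v then vs else e.2) := by
  refine image_congr fun ⟨a, b⟩ hab => if_neg ?_
  rintro ⟨ha, hb⟩
  simp only at ha hb
  subst ha hb
  exact hv hab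

def splitVerts (G : NGraph) : Finset ℕ := G.verts.filter fun u => splitKind G u ≠ 0

structure ValidSplit (G : NGraph) (v vs w vt : ℕ) : Prop where
  wellFormed : G.WellFormed
  mem : v ∈ G.verts
  kind_ne_zero : splitKind G v ≠ 0
  vs_fresh : vs ∉ G.verts
  w_fresh : w ∉ G.verts
  vt_fresh : vt ∉ G.verts
  vs_ne_w : vs ≠ w
  vs_ne_vt : vs ≠ vt
  w_ne_vt : w ≠ vt

namespace ValidSplit

variable {G : NGraph} {v vs w vt : ℕ} (h : ValidSplit G v vs w vt)
include h

theorem loopSlot_fresh : loopSlot (splitKind G v) vs w vt ∉ G.verts := by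
  unfold loopSlot; split_ifs
  exacts [h.vt_fresh, h.w_fresh, h.vs_fresh]

theorem fresh : vs ∉ G.verts ∧ w ∉ G.verts ∧ vt ∉ G.verts ∧
    loopSlot (splitKind G v) vs w vt ∉ G.verts ∧ vs ≠ w ∧ vs ≠ vt ∧ w ≠ vt :=
  ⟨h.vs_fresh, h.w_fresh, h.vt_fresh, h.loopSlot_fresh, h.vs_ne_w, h.vs_ne_vt, h.w_ne_vt⟩

theorem splitEdge_injOn :
    Set.InjOn (splitEdge v vs vt (loopSlot (splitKind G v) vs w vt)) G.edges := by
  rintro ⟨a, b⟩ hab ⟨c, d⟩ hcd heq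
  have := h.fresh; have := h.wellFormed _ hab; have := h.wellFormed _ hcd
  simp only [splitEdge] at heq
  grind

theorem disjoint_gadgetEdges_image :
    Disjoint (gadgetEdges (splitKind G v) vs w vt)
      (G.edges.image (splitEdge v vs vt (loopSlot (splitKind G v) vs w vt))) := by
  rw [disjoint_left]
  rintro e hg he
  obtain ⟨⟨a, b⟩, hab, rfl⟩ := mem_image.mp he
  have := h.fresh; have := h.wellFormed _ hab
  unfold gadgetEdges splitEdge at hg
  split_ifs at hg <;> simp only [mem_insert, mem_singleton] at hg <;> grind

theorem card_filter_split_edges (p : ℕ × ℕ → Prop) [DecidablePred p] :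
    #((G.split v vs w vt).edges.filter p) = #((gadgetEdges (splitKind G v) vs w vt).filter p) +
      #(G.edges.filter fun e => p (splitEdge v vs vt (loopSlot (splitKind G v) vs w vt) e)) := by
  rw [split, filter_union, card_union_of_disjoint
    (disjoint_filter_filter h.disjoint_gadgetEdges_image), filter_image,
    card_image_of_injOn (h.splitEdge_injOn.mono (filter_subset _ _))]

theorem loop_mem_split {x : ℕ} : (x, x) ∈ (G.split v vs w vt).edges ↔
    (x = loopSlot (splitKind G v) vs w vt ∧ (v, v) ∈ G.edges) ∨ (x ≠ v ∧ (x, x) ∈ G.edges) := by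
  simp only [split, gadgetEdges, splitEdge, mem_union, mem_image]
  constructor
  · rintro (hg | ⟨⟨a, b⟩, hab, he⟩)
    · have := h.fresh
      split_ifs at hg <;> simp only [mem_insert, mem_singleton] at hg <;> grind
    · have := h.fresh; have := h.wellFormed _ hab
      grind
  · rintro (⟨rfl, hv⟩ | ⟨hxv, hx⟩)
    · exact Or.inr ⟨(v, v), hv, by simp⟩
    · exact Or.inr ⟨(x, x), hx, by simp [hxv]⟩

section Degrees

variable {u : ℕ} (hu : u ∈ G.verts)
include hu

theorem din_split_of_ne (huv : u ≠ v) : din (G.split v vs w vt) u = din G u := by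
  have := h.fresh
  rw [din, h.card_filter_split_edges, card_gadgetEdges_in_eq_zero (by grind) (by grind), zero_add, din]
  refine congrArg card (filter_congr fun e he => ?_)
  have := h.wellFormed _ he
  simp only [splitEdge]
  grind

theorem dout_split_of_ne (huv : u ≠ v) : dout (G.split v vs w vt) u = dout G u := by
  have := h.fresh
  rw [dout, h.card_filter_split_edges, card_gadgetEdges_out_eq_zero (by grind) (by grind), zero_add, dout]
  refine congrArg card (filter_congr fun e he => ?_)
  have := h.wellFormed _ he
  simp only [splitEdge]
  grind

theorem loop_split_of_ne (huv : u ≠ v) : (u, u) ∈ (G.split v vs w vt).edges ↔ (u, u) ∈ G.edges := by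
  have := h.fresh
  rw [h.loop_mem_split]
  grind

theorem splitKind_split_of_ne (huv : u ≠ v) : splitKind (G.split v vs w vt) u = splitKind G u :=
  splitKind_congr (h.din_split_of_ne hu huv) (h.dout_split_of_ne hu huv) (h.loop_split_of_ne hu huv)

end Degrees

theorem din_split_vs : din (G.split v vs w vt) vs = din G v := by
  have := h.fresh
  rw [din, h.card_filter_split_edges, card_gadgetEdges_in_eq_zero (by grind) (by grind), zero_add, din]
  refine congrArg card (filter_congr fun e he => ?_)
  have := h.wellFormed _ he
  simp only [splitEdge]
  grind

theorem dout_split_vt : dout (G.split v vs w vt) vt = dout G v := by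
  have := h.fresh
  rw [dout, h.card_filter_split_edges, card_gadgetEdges_out_eq_zero (by grind) (by grind), zero_add,
    dout]
  refine congrArg card (filter_congr fun e he => ?_)
  have := h.wellFormed _ he
  simp only [splitEdge]
  grind

theorem din_split_le_one {x : ℕ} (hx : x = w ∨ x = vt) : din (G.split v vs w vt) x ≤ 1 := by
  have := h.fresh
  rw [din, h.card_filter_split_edges, filter_false_of_mem (s := G.edges) fun e he => ?_, card_empty,
    add_zero]
  · exact card_gadgetEdges_in_le_one
  have := h.wellFormed _ he
  simp only [splitEdge]
  grind

theorem dout_split_le_one {x : ℕ} (hx : x = vs ∨ x = w) : dout (G.split v vs w vt) x ≤ 1 := by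
  have := h.fresh
  rw [dout, h.card_filter_split_edges, filter_false_of_mem (s := G.edges) fun e he => ?_, card_empty,
    add_zero]
  · exact card_gadgetEdges_out_le_one
  have := h.wellFormed _ he
  simp only [splitEdge]
  grind

theorem loop_split_new {x : ℕ} (hx : x ∉ G.verts) : (x, x) ∈ (G.split v vs w vt).edges ↔
    x = loopSlot (splitKind G v) vs w vt ∧ (v, v) ∈ G.edges := by
  rw [h.loop_mem_split]
  have := fun hxx => hx (h.wellFormed (x, x) hxx).1
  tauto

theorem splitKind_split_new {x : ℕ} (hx : x = vs ∨ x = w ∨ x = vt) :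
    splitKind (G.split v vs w vt) x = 0 := by
  have := h.fresh
  rcases hx with rfl | rfl | rfl
  · refine splitKind_eq_zero_of_dout_le_one (h.dout_split_le_one (Or.inl rfl)) fun _ hl => ?_
    rw [h.loop_split_new h.vs_fresh] at hl
    rw [h.din_split_vs]
    exact din_le_one_of_loopSlot_eq_first h.kind_ne_zero ⟨h.vs_ne_w, h.vs_ne_vt⟩ hl.1.symm hl.2
  · exact splitKind_eq_zero_of_dout_le_one (h.dout_split_le_one (Or.inr rfl))
      fun _ _ => h.din_split_le_one (Or.inl rfl)
  · refine splitKind_eq_zero_of_din_le_one (h.din_split_le_one (Or.inr rfl)) fun _ hl => ?_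
    rw [h.loop_split_new h.vt_fresh] at hl
    rw [h.dout_split_vt]
    exact dout_le_one_of_loopSlot_eq_last h.kind_ne_zero ⟨h.vs_ne_vt, h.w_ne_vt⟩ hl.1.symm hl.2

theorem wellFormed_split : (G.split v vs w vt).WellFormed := by
  rintro e he
  simp only [split, mem_union, mem_image] at he
  simp only [mem_split_verts]
  rcases he with he | ⟨⟨a, b⟩, hab, rfl⟩
  · unfold gadgetEdges at he
    unfold gadgetVerts
    split_ifs at he ⊢ <;> simp only [mem_insert, mem_singleton] at he <;> grind
  · have := h.wellFormed _ hab
    unfold splitEdge loopSlot gadgetVerts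
    split_ifs <;> simp only [mem_insert, mem_singleton] <;> grind

theorem splitVerts_split : (G.split v vs w vt).splitVerts = G.splitVerts.erase v := by
  ext x
  simp only [splitVerts, mem_filter, mem_erase, mem_split_verts]
  by_cases hx : x ≠ v ∧ x ∈ G.verts
  · rw [h.splitKind_split_of_ne hx.2 hx.1]
    tauto
  · have hnew : x ∈ gadgetVerts (splitKind G v) vs w vt → splitKind (G.split v vs w vt) x = 0 :=
      fun hg => h.splitKind_split_new (mem_gadgetVerts hg)
    tauto

end ValidSplit

def stretchVerts (G : NGraph) (u : ℕ) : Finset ℕ :=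
  if splitKind G u = 0 then {3 * u} else gadgetVerts (splitKind G u) (3 * u) (3 * u + 1) (3 * u + 2)

def stretchGadget (G : NGraph) (u : ℕ) : Finset (ℕ × ℕ) :=
  if splitKind G u = 0 then ∅ else gadgetEdges (splitKind G u) (3 * u) (3 * u + 1) (3 * u + 2)

def loopVertex (G : NGraph) (u : ℕ) : ℕ := loopSlot (splitKind G u) (3 * u) (3 * u + 1) (3 * u + 2)

def outVertex (G : NGraph) (u : ℕ) : ℕ := if splitKind G u = 0 then 3 * u else 3 * u + 2

def stretchEdge (G : NGraph) (e : ℕ × ℕ) : ℕ × ℕ :=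
  if e.1 = e.2 then (loopVertex G e.1, loopVertex G e.1) else (outVertex G e.1, 3 * e.2)

def stretch (G : NGraph) : NGraph where
  verts := G.verts.biUnion (stretchVerts G)
  edges := G.edges.image (stretchEdge G) ∪ G.verts.biUnion (stretchGadget G)

section Stretch

variable {G : NGraph}

theorem stretch_verts : G.stretch.verts = G.verts.biUnion (stretchVerts G) := rfl

theorem stretch_edges :
    G.stretch.edges = G.edges.image (stretchEdge G) ∪ G.verts.biUnion (stretchGadget G) := rfl

theorem div_three_of_mem_stretchVerts {u x : ℕ} (hx : x ∈ stretchVerts G u) : x / 3 = u := by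
  unfold stretchVerts at hx
  split_ifs at hx
  · rw [mem_singleton.mp hx]; omega
  · rcases mem_gadgetVerts hx with rfl | rfl | rfl <;> omega

theorem loopVertex_div_three (u : ℕ) : loopVertex G u / 3 = u := by
  unfold loopVertex loopSlot; split_ifs <;> omega

theorem outVertex_div_three (u : ℕ) : outVertex G u / 3 = u := by
  unfold outVertex; split_ifs <;> omega

theorem mem_stretch_verts {x : ℕ} : x ∈ G.stretch.verts ↔ ∃ u ∈ G.verts, x ∈ stretchVerts G u := by
  simp [stretch]

theorem div_three_mem_of_mem_stretch {x : ℕ} (hx : x ∈ G.stretch.verts) : x / 3 ∈ G.verts := by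
  obtain ⟨u, hu, hx⟩ := mem_stretch_verts.mp hx
  rwa [div_three_of_mem_stretchVerts hx]

theorem loopVertex_mem (u : ℕ) : loopVertex G u ∈ stretchVerts G u := by
  unfold loopVertex stretchVerts gadgetVerts loopSlot; split_ifs <;> simp_all

theorem outVertex_mem (u : ℕ) : outVertex G u ∈ stretchVerts G u := by
  unfold outVertex stretchVerts gadgetVerts; split_ifs <;> simp

theorem three_mul_mem (u : ℕ) : 3 * u ∈ stretchVerts G u := by
  unfold stretchVerts gadgetVerts; split_ifs <;> simp

theorem stretchVerts_mem_of_mem_stretchGadget {u : ℕ} {e : ℕ × ℕ} (he : e ∈ stretchGadget G u) :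
    e.1 ∈ stretchVerts G u ∧ e.2 ∈ stretchVerts G u := by
  unfold stretchGadget at he
  unfold stretchVerts
  split_ifs at he ⊢
  · simp at he
  · exact gadgetVerts_mem_of_mem_gadgetEdges he

theorem wellFormed_stretch (hG : G.WellFormed) : G.stretch.WellFormed := by
  intro e he
  simp only [mem_stretch_verts]
  simp only [stretch, mem_union, mem_image, mem_biUnion] at he
  rcases he with ⟨⟨a, b⟩, hab, rfl⟩ | ⟨u, hu, he⟩
  · obtain ⟨ha, hb⟩ := hG _ hab
    unfold stretchEdge
    split_ifs
    · exact ⟨⟨a, ha, loopVertex_mem a⟩, ⟨a, ha, loopVertex_mem a⟩⟩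
    · exact ⟨⟨a, ha, outVertex_mem a⟩, ⟨b, hb, three_mul_mem b⟩⟩
  · obtain ⟨h1, h2⟩ := stretchVerts_mem_of_mem_stretchGadget he
    exact ⟨⟨u, hu, h1⟩, ⟨u, hu, h2⟩⟩

section KindZero

variable {u : ℕ} (hu : splitKind G u = 0)
include hu

theorem stretchVerts_of_splitKind_eq_zero : stretchVerts G u = {3 * u} := by
  rw [stretchVerts, if_pos hu]

theorem stretchGadget_of_splitKind_eq_zero : stretchGadget G u = ∅ := by
  rw [stretchGadget, if_pos hu]

theorem stretchEdge_of_splitKind_eq_zero {b : ℕ} (hb : u ≠ b) :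
    stretchEdge G (u, b) = (3 * u, 3 * b) := by
  simp [stretchEdge, outVertex, hu, hb]

theorem outVertex_of_splitKind_eq_zero : outVertex G u = 3 * u := by
  rw [outVertex, if_pos hu]

theorem loopVertex_of_splitKind_eq_zero : loopVertex G u = 3 * u := by
  simp [loopVertex, loopSlot, hu]

end KindZero

theorem nIso_stretch (hG : G.WellFormed) (h0 : ∀ u ∈ G.verts, splitKind G u = 0) :
    NIso G G.stretch := by
  refine nIso_of_image (φ := (3 * ·)) hG (fun x _ y _ hxy => by simpa using hxy) ?_ ?_
  · rw [stretch, ← biUnion_singleton]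
    exact biUnion_congr rfl fun u hu => (stretchVerts_of_splitKind_eq_zero (h0 u hu)).symm
  · have hgadget : G.verts.biUnion (stretchGadget G) = ∅ := by
      rw [← not_nonempty_iff_eq_empty, biUnion_nonempty]
      rintro ⟨u, hu, hne⟩
      rw [stretchGadget_of_splitKind_eq_zero (h0 u hu)] at hne
      exact not_nonempty_empty hne
    rw [stretch, hgadget, union_empty]
    refine image_congr fun ⟨a, b⟩ hab => ?_
    obtain ⟨ha, -⟩ := hG _ hab
    by_cases hb : a = b
    · subst hb
      simp [stretchEdge, loopVertex_of_splitKind_eq_zero (h0 a ha)]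
    · simp [stretchEdge_of_splitKind_eq_zero (h0 a ha) hb]

end Stretch

def relabel (v vs w vt x : ℕ) : ℕ :=
  if x = 3 * v then 3 * vs else if x = 3 * v + 1 then 3 * w else if x = 3 * v + 2 then 3 * vt else x

section Relabel

variable {v vs w vt : ℕ}

theorem relabel_of_div_ne {x : ℕ} (hx : x / 3 ≠ v) : relabel v vs w vt x = x := by
  unfold relabel; split_ifs <;> omega

@[simp] theorem relabel_three_mul : relabel v vs w vt (3 * v) = 3 * vs := by simp [relabel]

@[simp] theorem relabel_three_mul_add_one : relabel v vs w vt (3 * v + 1) = 3 * w := by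
  simp [relabel]

@[simp] theorem relabel_three_mul_add_two : relabel v vs w vt (3 * v + 2) = 3 * vt := by
  simp [relabel]

theorem relabel_three_mul_eq (b : ℕ) :
    relabel v vs w vt (3 * b) = 3 * if b = v then vs else b := by
  split_ifs with hbv
  · rw [hbv, relabel_three_mul]
  · exact relabel_of_div_ne (by omega)

end Relabel

namespace ValidSplit

variable {G : NGraph} {v vs w vt : ℕ} (h : ValidSplit G v vs w vt)
include h

section Old

variable {u : ℕ} (hu : u ∈ G.verts) (huv : u ≠ v)
include hu huv

theorem stretchVerts_split_of_ne : stretchVerts (G.split v vs w vt) u = stretchVerts G u := by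
  rw [stretchVerts, stretchVerts, h.splitKind_split_of_ne hu huv]

theorem stretchGadget_split_of_ne : stretchGadget (G.split v vs w vt) u = stretchGadget G u := by
  rw [stretchGadget, stretchGadget, h.splitKind_split_of_ne hu huv]

theorem loopVertex_split_of_ne : loopVertex (G.split v vs w vt) u = loopVertex G u := by
  rw [loopVertex, loopVertex, h.splitKind_split_of_ne hu huv]

theorem outVertex_split_of_ne : outVertex (G.split v vs w vt) u = outVertex G u := by
  rw [outVertex, outVertex, h.splitKind_split_of_ne hu huv]

end Old

theorem image_relabel_stretchVerts :
    (stretchVerts G v).image (relabel v vs w vt) =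
      gadgetVerts (splitKind G v) (3 * vs) (3 * w) (3 * vt) := by
  rw [stretchVerts, if_neg h.kind_ne_zero, image_gadgetVerts]
  simp

theorem image_relabel_stretchGadget :
    (stretchGadget G v).image (Prod.map (relabel v vs w vt) (relabel v vs w vt)) =
      gadgetEdges (splitKind G v) (3 * vs) (3 * w) (3 * vt) := by
  rw [stretchGadget, if_neg h.kind_ne_zero, image_gadgetEdges]
  simp

theorem relabel_loopVertex {a : ℕ} (ha : a ∈ G.verts) :
    relabel v vs w vt (loopVertex G a) =
      loopVertex (G.split v vs w vt) (if a = v then loopSlot (splitKind G v) vs w vt else a) := by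
  split_ifs with hav
  · subst hav
    rw [loopVertex_of_splitKind_eq_zero (h.splitKind_split_new (loopSlot_eq _ vs w vt)),
      loopVertex, apply_loopSlot (relabel a vs w vt), relabel_three_mul,
      relabel_three_mul_add_one, relabel_three_mul_add_two, apply_loopSlot (3 * ·)]
  · rw [h.loopVertex_split_of_ne ha hav, relabel_of_div_ne (by rwa [loopVertex_div_three])]

theorem relabel_outVertex {a : ℕ} (ha : a ∈ G.verts) :
    relabel v vs w vt (outVertex G a) =
      outVertex (G.split v vs w vt) (if a = v then vt else a) := by
  split_ifs with hav
  · subst hav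
    rw [outVertex_of_splitKind_eq_zero (h.splitKind_split_new (Or.inr (Or.inr rfl))),
      outVertex, if_neg h.kind_ne_zero, relabel_three_mul_add_two]
  · rw [h.outVertex_split_of_ne ha hav, relabel_of_div_ne (by rwa [outVertex_div_three])]

theorem stretchEdge_splitEdge {e : ℕ × ℕ} (he : e ∈ G.edges) :
    stretchEdge (G.split v vs w vt) (splitEdge v vs vt (loopSlot (splitKind G v) vs w vt) e) =
      Prod.map (relabel v vs w vt) (relabel v vs w vt) (stretchEdge G e) := by
  obtain ⟨a, b⟩ := e
  obtain ⟨ha, hb⟩ := h.wellFormed _ he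
  by_cases hab : a = b
  · subst hab
    rw [splitEdge_loop, stretchEdge, if_pos rfl, stretchEdge, if_pos rfl, Prod.map,
      h.relabel_loopVertex ha]
  · have hne : (if a = v then vt else a) ≠ (if b = v then vs else b) := by
      have := h.fresh
      grind
    rw [splitEdge_of_ne hab, stretchEdge, if_neg hne, stretchEdge, if_neg hab, Prod.map,
      h.relabel_outVertex ha, relabel_three_mul_eq]

theorem image_stretchEdge_gadgetEdges :
    (gadgetEdges (splitKind G v) vs w vt).image (stretchEdge (G.split v vs w vt)) =
      gadgetEdges (splitKind G v) (3 * vs) (3 * w) (3 * vt) := by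
  rw [← image_gadgetEdges (3 * ·)]
  refine image_congr fun e he => ?_
  have hne : e.1 ≠ e.2 := fst_ne_snd_of_mem_gadgetEdges h.vs_ne_w h.vs_ne_vt h.w_ne_vt he
  have h0 : splitKind (G.split v vs w vt) e.1 = 0 :=
    h.splitKind_split_new (mem_gadgetVerts (gadgetVerts_mem_of_mem_gadgetEdges he).1)
  exact stretchEdge_of_splitKind_eq_zero h0 hne

theorem injOn_relabel : Set.InjOn (relabel v vs w vt) G.stretch.verts := by
  have hfresh : ∀ z ∈ G.stretch.verts, z / 3 ≠ vs ∧ z / 3 ≠ w ∧ z / 3 ≠ vt := by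
    intro z hz
    have hz3 := div_three_mem_of_mem_stretch hz
    refine ⟨?_, ?_, ?_⟩ <;> rintro hzn <;> rw [hzn] at hz3
    exacts [h.vs_fresh hz3, h.w_fresh hz3, h.vt_fresh hz3]
  intro x hx y hy hxy
  have := hfresh x hx; have := hfresh y hy; have := h.fresh
  unfold relabel at hxy
  split_ifs at hxy <;> omega

theorem image_relabel_stretch_verts :
    G.stretch.verts.image (relabel v vs w vt) = (G.split v vs w vt).stretch.verts := by
  have hold : ∀ u ∈ G.verts.erase v,
      (stretchVerts G u).image (relabel v vs w vt) = stretchVerts (G.split v vs w vt) u := by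
    intro u hu
    obtain ⟨huv, hu⟩ := mem_erase.mp hu
    rw [h.stretchVerts_split_of_ne hu huv]
    refine (image_congr (g := fun x => x) fun x hx => relabel_of_div_ne ?_).trans image_id'
    rwa [div_three_of_mem_stretchVerts hx]
  have hnew : ∀ x ∈ gadgetVerts (splitKind G v) vs w vt,
      stretchVerts (G.split v vs w vt) x = {3 * x} := fun x hx =>
    stretchVerts_of_splitKind_eq_zero (h.splitKind_split_new (mem_gadgetVerts hx))
  rw [stretch_verts, stretch_verts, split_verts, biUnion_image, biUnion_eq_union_erase h.mem,
    union_biUnion, biUnion_congr rfl hnew, biUnion_singleton, image_gadgetVerts,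
    h.image_relabel_stretchVerts, biUnion_congr rfl hold]

theorem image_relabel_stretch_edges :
    G.stretch.edges.image (Prod.map (relabel v vs w vt) (relabel v vs w vt)) =
      (G.split v vs w vt).stretch.edges := by
  have hold : ∀ u ∈ G.verts.erase v,
      (stretchGadget G u).image (Prod.map (relabel v vs w vt) (relabel v vs w vt)) =
        stretchGadget (G.split v vs w vt) u := by
    intro u hu
    obtain ⟨huv, hu⟩ := mem_erase.mp hu
    rw [h.stretchGadget_split_of_ne hu huv]
    refine (image_congr (g := fun e => e) fun e he => ?_).trans image_id'
    obtain ⟨h1, h2⟩ := stretchVerts_mem_of_mem_stretchGadget he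
    rw [Prod.map, relabel_of_div_ne (by rwa [div_three_of_mem_stretchVerts h1]),
      relabel_of_div_ne (by rwa [div_three_of_mem_stretchVerts h2])]
  have hnew : (gadgetVerts (splitKind G v) vs w vt).biUnion (stretchGadget (G.split v vs w vt)) =
      ∅ := by
    refine eq_empty_of_forall_notMem fun e he => ?_
    obtain ⟨x, hx, he⟩ := mem_biUnion.mp he
    rw [stretchGadget_of_splitKind_eq_zero (h.splitKind_split_new (mem_gadgetVerts hx))] at he
    exact notMem_empty e he
  have himage : (G.edges.image (splitEdge v vs vt (loopSlot (splitKind G v) vs w vt))).image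
      (stretchEdge (G.split v vs w vt)) =
      (G.edges.image (stretchEdge G)).image (Prod.map (relabel v vs w vt) (relabel v vs w vt)) := by
    rw [image_image, image_image]
    exact image_congr fun e he => h.stretchEdge_splitEdge he
  rw [stretch_edges, stretch_edges, split_edges, split_verts, image_union, image_union,
    biUnion_image, himage, biUnion_eq_union_erase h.mem, union_biUnion, hnew, empty_union,
    h.image_stretchEdge_gadgetEdges, h.image_relabel_stretchGadget, biUnion_congr rfl hold]
  ac_rfl

theorem nIso_stretch_split : NIso G.stretch (G.split v vs w vt).stretch :=
  nIso_of_image (wellFormed_stretch h.wellFormed) h.injOn_relabel h.image_relabel_stretch_verts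
    h.image_relabel_stretch_edges

end ValidSplit

theorem exists_validSplit_step {s t : ℕ} {G : NGraph} {v : ℕ} (hG : G.WellFormed)
    (hv : v ∈ G.verts) (hs : v ≠ s) (ht : v ≠ t) (happ : Applicable G v) :
    ∃ vs w vt, G.ValidSplit v vs w vt ∧ Step s t G (G.split v vs w vt) := by
  obtain ⟨vs, hvs⟩ := exists_notMem G.verts
  obtain ⟨vt, hvt, hst, -⟩ := exists_notMem_ne G.verts vs vs
  obtain ⟨w, hw, hsw, hwt⟩ := exists_notMem_ne G.verts vs vt
  refine ⟨vs, w, vt, ⟨hG, hv, splitKind_ne_zero_iff.mpr happ, hvs, hw, hvt, hsw, hst, hwt⟩,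
    v, hv, hs, ht, ?_⟩
  rcases happ with h | h | h | h
  · rw [split_of_splitKind_ne_four (by rw [splitKind_eq_one h]; decide), splitKind_eq_one h]
    exact Or.inl ⟨h.1, h.2.1, h.2.2, vs, vt, hvs, hvt, hst, rfl, rfl⟩
  · rw [split_of_splitKind_ne_four (by rw [splitKind_eq_two h]; decide), splitKind_eq_two h]
    exact Or.inr <| Or.inl ⟨h.1, h.2.1, h.2.2, vs, vt, hvs, hvt, hst, rfl, rfl⟩
  · rw [split_of_splitKind_ne_four (by rw [splitKind_eq_three h]; decide),
      image_splitEdge_of_loop_notMem h.2.2]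
    exact Or.inr <| Or.inr <| Or.inl ⟨h.1, h.2.1, h.2.2, vs, vt, hvs, hvt, hst, rfl, rfl⟩
  · rw [split_of_splitKind_eq_four (splitKind_eq_four h)]
    exact Or.inr <| Or.inr <| Or.inr ⟨h.1, h.2.1, h.2.2, vs, w, vt, hvs, hw, hvt, hsw, hst, hwt,
      rfl, rfl⟩

theorem exists_validSplit_of_forall_eq_split {G G' : NGraph} {v vs vt : ℕ} (hG : G.WellFormed)
    (hv : v ∈ G.verts) (hk : splitKind G v ≠ 0) (hvs : vs ∉ G.verts) (hvt : vt ∉ G.verts)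
    (hst : vs ≠ vt) (hG' : ∀ w, G' = G.split v vs w vt) :
    ∃ vs w vt, G.ValidSplit v vs w vt ∧ G' = G.split v vs w vt := by
  obtain ⟨w, hw, hsw, hwt⟩ := exists_notMem_ne G.verts vs vt
  exact ⟨vs, w, vt, ⟨hG, hv, hk, hvs, hw, hvt, hsw, hst, hwt⟩, hG' w⟩

theorem _root_.Step.exists_validSplit {s t : ℕ} {G G' : NGraph} (hG : G.WellFormed)
    (hstep : Step s t G G') : ∃ v vs w vt, G.ValidSplit v vs w vt ∧ G' = G.split v vs w vt := by
  obtain ⟨v, hv, -, -, hsplit⟩ := hstep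
  refine ⟨v, ?_⟩
  rcases hsplit with ⟨h1, h2, h3, vs, vt, hvs, hvt, hst, hV, hE⟩ |
    ⟨h1, h2, h3, vs, vt, hvs, hvt, hst, hV, hE⟩ | ⟨h1, h2, h3, vs, vt, hvs, hvt, hst, hV, hE⟩ |
    ⟨h1, h2, h3, vs, w, vt, hvs, hw, hvt, hsw, hst, hwt, hV, hE⟩
  · have hk := splitKind_eq_one ⟨h1, h2, h3⟩
    refine exists_validSplit_of_forall_eq_split hG hv (by omega) hvs hvt hst fun w => ?_
    rw [split_of_splitKind_ne_four (by omega), hk]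
    exact ext hV hE
  · have hk := splitKind_eq_two ⟨h1, h2, h3⟩
    refine exists_validSplit_of_forall_eq_split hG hv (by omega) hvs hvt hst fun w => ?_
    rw [split_of_splitKind_ne_four (by omega), hk]
    exact ext hV hE
  · have hk := splitKind_eq_three ⟨h1, h2, h3⟩
    refine exists_validSplit_of_forall_eq_split hG hv (by omega) hvs hvt hst fun w => ?_
    rw [split_of_splitKind_ne_four (by omega), image_splitEdge_of_loop_notMem h3]
    exact ext hV hE
  · have hk := splitKind_eq_four ⟨h1, h2, h3⟩
    refine ⟨vs, w, vt, ⟨hG, hv, by omega, hvs, hw, hvt, hsw, hst, hwt⟩, ?_⟩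
    rw [split_of_splitKind_eq_four hk]
    exact ext hV hE

structure Admissible (s t : ℕ) (G : NGraph) : Prop where
  wellFormed : G.WellFormed
  interior : ∀ u ∈ G.splitVerts, u ≠ s ∧ u ≠ t

theorem admissible_of_isFlowGraph {G : NGraph} {s t : ℕ} (hG : NIsFlowGraph G s t) :
    Admissible s t G := by
  obtain ⟨hwf, -, -, hsrc, htgt, -⟩ := hG
  refine ⟨hwf, fun u hu => ?_⟩
  obtain ⟨hu, hk⟩ := mem_filter.mp hu
  refine ⟨fun hus => hk ?_, fun hut => hk ?_⟩
  · have hin : din G u = 0 := by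
      refine card_eq_zero.mpr (filter_eq_empty_iff.mpr fun ⟨a, b⟩ hab ⟨hb, ha⟩ => ?_)
      simp only at hb ha
      exact (hsrc u hu).mpr hus a (hb ▸ ha) (hb ▸ hab)
    exact splitKind_eq_zero_of_din_le_one (by omega) (by omega)
  · have hout : dout G u = 0 := by
      refine card_eq_zero.mpr (filter_eq_empty_iff.mpr fun ⟨a, b⟩ hab ⟨ha, hb⟩ => ?_)
      simp only at hb ha
      exact (htgt u hu).mpr hut b (ha ▸ hb) (ha ▸ hab)
    exact splitKind_eq_zero_of_dout_le_one (by omega) (by omega)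

namespace Admissible

variable {s t : ℕ} {G : NGraph} (hA : Admissible s t G)
include hA

theorem split {v vs w vt : ℕ} (h : G.ValidSplit v vs w vt) :
    Admissible s t (G.split v vs w vt) := by
  refine ⟨h.wellFormed_split, fun u hu => hA.interior u ?_⟩
  rw [h.splitVerts_split] at hu
  exact mem_of_mem_erase hu

theorem splitKind_eq_zero (hN : NormalForm s t G) : ∀ u ∈ G.verts, splitKind G u = 0 := by
  intro u hu
  by_contra hk
  obtain ⟨hs, ht⟩ := hA.interior u (mem_filter.mpr ⟨hu, hk⟩)
  exact hN u hu hs ht (splitKind_ne_zero_iff.mp hk)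

theorem exists_normalForm : ∃ H, Relation.ReflTransGen (Step s t) G H ∧ NormalForm s t H := by
  induction hn : #G.splitVerts using Nat.strong_induction_on generalizing G with
  | _ n ih =>
  by_cases hN : NormalForm s t G
  · exact ⟨G, .refl, hN⟩
  obtain ⟨v, hv, hs, ht, happ⟩ : ∃ v ∈ G.verts, v ≠ s ∧ v ≠ t ∧ Applicable G v := by
    simpa [NormalForm] using hN
  obtain ⟨vs, w, vt, h, hstep⟩ := exists_validSplit_step hA.wellFormed hv hs ht happ
  have hlt : #(G.split v vs w vt).splitVerts < n := by
    rw [h.splitVerts_split, ← hn]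
    exact card_erase_lt_of_mem (mem_filter.mpr ⟨h.mem, h.kind_ne_zero⟩)
  obtain ⟨H, hH, hHN⟩ := ih _ hlt (hA.split h) rfl
  exact ⟨H, .head hstep hH, hHN⟩

end Admissible

theorem nIso_stretch_of_reflTransGen {s t : ℕ} {G H : NGraph}
    (hGH : Relation.ReflTransGen (Step s t) G H) (hA : Admissible s t G) (hN : NormalForm s t H) :
    NIso H G.stretch := by
  induction hGH using Relation.ReflTransGen.head_induction_on with
  | refl => exact nIso_stretch hA.wellFormed (hA.splitKind_eq_zero hN)
  | head hstep _ ih =>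
    obtain ⟨v, vs, w, vt, h, rfl⟩ := hstep.exists_validSplit hA.wellFormed
    exact (ih (hA.split h)).trans h.nIso_stretch_split.symm

end NGraph

/-- The stretching of a flow graph is well defined: the splitting transformations can be
carried out to completion, and the cumulative result is independent of the order of
application (up to isomorphism); moreover the result is stable, i.e. no interior vertex
of a normal form satisfies the hypotheses of any of the four transformations. -/
theorem stmt13 (G : NGraph) (s t : ℕ) (hFG : NIsFlowGraph G s t) :
    (∃ H : NGraph, Relation.ReflTransGen (Step s t) G H ∧ NormalForm s t H) ∧
    (∀ H H' : NGraph, Relation.ReflTransGen (Step s t) G H →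
      Relation.ReflTransGen (Step s t) G H' →
      NormalForm s t H → NormalForm s t H' → NIso H H') := by
  have hA := NGraph.admissible_of_isFlowGraph hFG
  refine ⟨hA.exists_normalForm, fun H H' hH hH' hN hN' => ?_⟩
  exact (NGraph.nIso_stretch_of_reflTransGen hH hA hN).trans
    (NGraph.nIso_stretch_of_reflTransGen hH' hA hN').symm
end

section
/- There exists a planar flow graph whose stretching is nonplanar. Concretely: the flow graph on vertices {1,...,7} with edges 1→2, 2→3, 2→5, 2→6, 3→4, 4→5, 4→6, 5→7, 6→3, 6→5 is planar, but after splitting vertex 6 into 6_s (receiving edges from 2 and 4) and 6_t (emitting edges to 3 and 5) with an edge 6_s→6_t, the underlying undirected graph contains a subdivision of K_{3,3} and hence is nonplanar. -/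
/-- `H` contains a subdivision of `K`: there are branch vertices (an injection of the
vertices of `K`) and, for each edge of `K`, a path in `H` between the corresponding
branch vertices, such that the paths avoid branch vertices internally and are internally
disjoint from one another. -/
def ContainsSubdivision {α β : Type} (K : SimpleGraph α) (H : SimpleGraph β) : Prop :=
  ∃ f : α ↪ β, ∃ P : ∀ a b, K.Adj a b → H.Walk (f a) (f b),
    (∀ a b (h : K.Adj a b), (P a b h).IsPath) ∧
    (∀ a b (h : K.Adj a b) (c : α), f c ∈ (P a b h).support → c = a ∨ c = b) ∧
    (∀ a b a' b' (h : K.Adj a b) (h' : K.Adj a' b'), s(a, b) ≠ s(a', b') →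
      ∀ v, v ∈ (P a b h).support → v ∈ (P a' b' h').support →
        (v = f a ∨ v = f b) ∧ (v = f a' ∨ v = f b'))

/-- Planarity, via Kuratowski's characterization: a finite graph is planar iff it
contains no subdivision of `K₅` or `K₃,₃`. -/
def KPlanar {β : Type} (H : SimpleGraph β) : Prop :=
  ¬ContainsSubdivision (⊤ : SimpleGraph (Fin 5)) H ∧
  ¬ContainsSubdivision (completeBipartiteGraph (Fin 3) (Fin 3)) H

/-- The underlying undirected graph of the flow graph on vertices `{1,…,7}` (0-indexed
here as `Fin 7`) with edges 1→2, 2→3, 2→5, 2→6, 3→4, 4→5, 4→6, 5→7, 6→3, 6→5. -/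
def exampleGraph : SimpleGraph (Fin 7) :=
  SimpleGraph.fromRel (fun a b =>
    (a, b) ∈ [((0 : Fin 7), (1 : Fin 7)), (1, 2), (1, 4), (1, 5), (2, 3), (3, 4), (3, 5),
      (4, 6), (5, 2), (5, 4)])

/-- The underlying undirected graph of its stretching: vertex 6 is split into `6ₛ`
(index 5, receiving the edges from 2 and 4) and `6ₜ` (index 7, emitting the edges to 3
and 5), with a new edge `6ₛ → 6ₜ`. -/
def exampleStretched : SimpleGraph (Fin 8) :=
  SimpleGraph.fromRel (fun a b =>
    (a, b) ∈ [((0 : Fin 8), (1 : Fin 8)), (1, 2), (1, 4), (1, 5), (2, 3), (3, 4), (3, 5),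
      (4, 6), (7, 2), (7, 4), (5, 7)])


/-!
In a subdivision of `K` inside `H`, the first edges of the paths leaving a branch vertex are
distinct, so each branch vertex has degree at least its degree in `K`. The example graph has
only three vertices of degree `≥ 4` and only five of degree `≥ 3`, too few to carry the
branch vertices of a subdivided `K₅` or `K₃,₃`. Its stretching contains `K₃,₃` outright,
with sides `{2, 4, 6ₜ}` and `{3, 5, 6ₛ}`.
-/

open SimpleGraph Finset

instance : DecidableRel exampleGraph.Adj :=
  inferInstanceAs (DecidableRel (fromRel _).Adj)

instance : DecidableRel exampleStretched.Adj :=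
  inferInstanceAs (DecidableRel (fromRel _).Adj)

instance : DecidableRel (completeBipartiteGraph (Fin 3) (Fin 3)).Adj := fun _ _ =>
  inferInstanceAs (Decidable (_ ∨ _))

namespace ContainsSubdivision

variable {α β : Type} {K : SimpleGraph α} {H : SimpleGraph β}

theorem of_isContained (h : K ⊑ H) : ContainsSubdivision K H := by
  obtain ⟨φ⟩ := h
  have hadj : ∀ a b, K.Adj a b → H.Adj (φ.toEmbedding a) (φ.toEmbedding b) :=
    fun _ _ hab => φ.toHom.map_adj hab
  refine ⟨φ.toEmbedding, fun a b hab => (hadj a b hab).toWalk,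
    fun a b hab => Adj.isPath_toWalk _, fun a b hab c hc => ?_, fun a b a' b' _ _ _ v hv hv' => ?_⟩
  · simp only [Adj.support_toWalk, List.mem_cons, List.not_mem_nil, or_false] at hc
    exact hc.imp (φ.toEmbedding.injective ·) (φ.toEmbedding.injective ·)
  · simp only [Adj.support_toWalk, List.mem_cons, List.not_mem_nil, or_false] at hv hv'
    exact ⟨hv, hv'⟩

theorem exists_embedding_degree_le [K.LocallyFinite] [H.LocallyFinite]
    (h : ContainsSubdivision K H) : ∃ f : α ↪ β, ∀ a, K.degree a ≤ H.degree (f a) := by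
  obtain ⟨f, P, -, -, hdisj⟩ := h
  refine ⟨f, fun a => ?_⟩
  have hnil : ∀ b (hab : K.Adj a b), ¬(P a b hab).Nil := fun b hab =>
    Walk.not_nil_of_ne (f.injective.ne hab.ne)
  let firstStep : K.neighborSet a → H.neighborSet (f a) := fun b =>
    ⟨(P a b b.2).snd, Walk.adj_snd (hnil b b.2)⟩
  rw [← card_neighborSet_eq_degree, ← card_neighborSet_eq_degree]
  refine Fintype.card_le_of_injective firstStep fun ⟨b, hab⟩ ⟨c, hac⟩ hbc => ?_
  have hsnd : (P a b hab).snd = (P a c hac).snd := congrArg Subtype.val hbc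
  by_contra hne
  have hedge : s(a, b) ≠ s(a, c) := fun h => hne (Subtype.ext (Sym2.congr_right.mp h))
  obtain ⟨hb, hc⟩ := hdisj a b a c hab hac hedge (P a b hab).snd
    (Walk.getVert_mem_support _ 1) (hsnd ▸ Walk.getVert_mem_support _ 1)
  have hsnd_ne : (P a b hab).snd ≠ f a := (Walk.adj_snd (hnil b hab)).ne.symm
  rw [or_iff_right hsnd_ne] at hb
  rw [or_iff_right hsnd_ne] at hc
  exact hne (Subtype.ext (f.injective (hb.symm.trans hc)))

theorem card_le_card_filter_degree [Fintype α] [Fintype β] [DecidableRel K.Adj]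
    [DecidableRel H.Adj] (h : ContainsSubdivision K H) {d : ℕ} (hd : ∀ a, d ≤ K.degree a) :
    Fintype.card α ≤ #{v | d ≤ H.degree v} := by
  obtain ⟨f, hf⟩ := h.exists_embedding_degree_le
  rw [← card_univ]
  exact card_le_card_of_injOn f (fun a _ => mem_filter.2 ⟨mem_univ _, (hd a).trans (hf a)⟩)
    f.injective.injOn

end ContainsSubdivision

theorem kPlanar_exampleGraph : KPlanar exampleGraph :=
  ⟨fun h => absurd (h.card_le_card_filter_degree (d := 4) (by decide)) (by decide),
    fun h => absurd (h.card_le_card_filter_degree (d := 3) (by decide)) (by decide)⟩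

theorem completeBipartiteGraph_isContained_exampleStretched :
    completeBipartiteGraph (Fin 3) (Fin 3) ⊑ exampleStretched :=
  ⟨⟨⟨Sum.elim ![1, 3, 7] ![2, 4, 5], fun {a b} => by revert a b; decide⟩, by decide⟩⟩

/-- There is a planar flow graph whose stretching is nonplanar: the example graph is
planar, but its stretching contains a subdivision of `K₃,₃` and hence is nonplanar. -/
theorem stmt14 :
    KPlanar exampleGraph ∧
    ContainsSubdivision (completeBipartiteGraph (Fin 3) (Fin 3)) exampleStretched ∧
    ¬KPlanar exampleStretched := by
  have hK33 := ContainsSubdivision.of_isContained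
    completeBipartiteGraph_isContained_exampleStretched
  exact ⟨kPlanar_exampleGraph, hK33, fun hplanar => hplanar.2 hK33⟩
end

section
/- The collection {P(n)} of flow graphs with n linearly ordered edges, together with the substitution operation that replaces the j-th edge of G ∈ P(n) by the flow graph G_j ∈ P(k_j) (identifying the entry edge of G_j with the replaced edge's source side and exit edge with its target side) and the unit e (the flow graph consisting of a single edge), forms a symmetric operad in Set: substitution is associative, e is a two-sided unit, and substitution is equivariant with respect to permutations of the ordered edges. -/
/-- A digraph with designated source `s` and target `t` and a linearly ordered list of
edges `es` (the carrier of a flow graph with ordered edges). -/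
structure OFG where
  V : Type
  s : V
  t : V
  es : List (V × V)

/-- `G` is a flow graph: `s` has no incoming edges, `t` no outgoing edges, there is a
unique entry edge out of `s` and a unique exit edge into `t`, and every edge lies on a
source-to-target path. -/
def IsFlowO (G : OFG) : Prop :=
  (∀ e ∈ G.es, e.2 ≠ G.s) ∧ (∀ e ∈ G.es, e.1 ≠ G.t) ∧
  (∃! i : Fin G.es.length, (G.es.get i).1 = G.s) ∧
  (∃! i : Fin G.es.length, (G.es.get i).2 = G.t) ∧
  (∀ e ∈ G.es, ∃ p : List G.V, p.head? = some G.s ∧ p.getLast? = some G.t ∧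
    p.Chain' (fun a b => (a, b) ∈ G.es) ∧ e ∈ p.zip p.tail)

/-- The gluing relation for substitution: the source/target of the `j`-th flow graph
`Gs j` is identified with the source/target of the `j`-th edge of `G`. -/
def oGlueRel (G : OFG) (Gs : ℕ → OFG) :
    (G.V ⊕ Σ j : Fin G.es.length, (Gs (j : ℕ)).V) →
    (G.V ⊕ Σ j : Fin G.es.length, (Gs (j : ℕ)).V) → Prop :=
  fun x y => ∃ j : Fin G.es.length,
    (x = Sum.inl (G.es.get j).1 ∧ y = Sum.inr ⟨j, (Gs (j : ℕ)).s⟩) ∨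
    (x = Sum.inl (G.es.get j).2 ∧ y = Sum.inr ⟨j, (Gs (j : ℕ)).t⟩)

/-- Vertices of the substitution `G ∘ (Gs)`. -/
def compV (G : OFG) (Gs : ℕ → OFG) : Type := Quot (oGlueRel G Gs)

/-- The canonical embedding of the vertices of `Gs j` into the substitution. -/
def compEmb (G : OFG) (Gs : ℕ → OFG) (j : Fin G.es.length) :
    (Gs (j : ℕ)).V → compV G Gs :=
  fun v => Quot.mk (oGlueRel G Gs) (Sum.inr ⟨j, v⟩)

/-- The block of edges of the substitution coming from `Gs j`, in their given order. -/
def compBlock (G : OFG) (Gs : ℕ → OFG) (j : Fin G.es.length) :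
    List (compV G Gs × compV G Gs) :=
  (Gs (j : ℕ)).es.map (fun e => (compEmb G Gs j e.1, compEmb G Gs j e.2))

/-- Operadic substitution: replace the `j`-th edge of `G` by the flow graph `Gs j`,
with edge ordering inherited blockwise. -/
def compO (G : OFG) (Gs : ℕ → OFG) : OFG where
  V := compV G Gs
  s := Quot.mk (oGlueRel G Gs) (Sum.inl G.s)
  t := Quot.mk (oGlueRel G Gs) (Sum.inl G.t)
  es := (List.finRange G.es.length).flatMap (compBlock G Gs)

/-- The unit: the flow graph with a single edge. -/
def unitO : OFG := ⟨Bool, false, true, [(false, true)]⟩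

/-- Isomorphism of flow graphs with ordered edges: a vertex bijection preserving source,
target, and the ordered edge list. -/
def OIso (G G' : OFG) : Prop :=
  ∃ φ : G.V ≃ G'.V, φ G.s = G'.s ∧ φ G.t = G'.t ∧
    G'.es = G.es.map (Prod.map φ φ)

/-- The position at which the block of `Gs j` starts in the substituted edge list. -/
def offsetO (Gs : ℕ → OFG) (j : ℕ) : ℕ :=
  ((List.range j).map (fun a => (Gs a).es.length)).sum

/-- Reordering the edges of `G` by a permutation `σ`. -/
def permO (G : OFG) (σ : Equiv.Perm (Fin G.es.length)) : OFG :=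
  ⟨G.V, G.s, G.t, List.ofFn (fun i => G.es.get (σ i))⟩

/-!
The substitution `compO G Gs` is a pushout: it glues each `Gs j` to `G` along the source and
target of the `j`-th edge. Maps out of it are therefore given by compatible maps on `G` and on
the `Gs j`, and its edges are indexed by pairs `⟨j, i⟩`, the `i`-th edge of `Gs j` sitting at
position `offsetO Gs j + i`. Each operad axiom is then an explicit pair of mutually inverse
vertex maps which match the edge lists block by block; for associativity, the graph substituted
at the edge `⟨j, i⟩` of `G ∘ Gs` is the one substituted at the `i`-th edge of `Gs j`.

Flow graphs are closed under substitution because a vertex of `Gs j` is glued to the source of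
`G` exactly when it is the source of `Gs j` and the `j`-th edge of `G` is the entry edge, so the
entry edge of `G ∘ Gs` is the pair of the two entry edges (dually for the exit edge). An edge lies
on a source-to-target path iff its endpoints are reachable from the source and reach the target;
reachability in `G` lifts to the substitution since each edge of `G` is replaced by a graph in
which its source reaches its target.
-/

lemma OIso.of_inverse {G G' : OFG} (f : G.V → G'.V) (g : G'.V → G.V)
    (hgf : Function.LeftInverse g f) (hfg : Function.RightInverse g f)
    (hs : f G.s = G'.s) (ht : f G.t = G'.t) (hes : G'.es = G.es.map (Prod.map f f)) :
    OIso G G' :=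
  ⟨⟨f, g, hgf, hfg⟩, hs, ht, hes⟩

section Substitution

variable {G : OFG} {Gs : ℕ → OFG}

def compInl (G : OFG) (Gs : ℕ → OFG) (a : G.V) : compV G Gs :=
  Quot.mk (oGlueRel G Gs) (Sum.inl a)

lemma compEmb_s (j : Fin G.es.length) :
    compEmb G Gs j (Gs j).s = compInl G Gs (G.es.get j).1 :=
  (Quot.sound ⟨j, Or.inl ⟨rfl, rfl⟩⟩).symm

lemma compEmb_t (j : Fin G.es.length) :
    compEmb G Gs j (Gs j).t = compInl G Gs (G.es.get j).2 :=
  (Quot.sound ⟨j, Or.inr ⟨rfl, rfl⟩⟩).symm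

def compV.lift {T : Sort*} (f : G.V → T) (g : ∀ j : Fin G.es.length, (Gs j).V → T)
    (hs : ∀ j, g j (Gs j).s = f (G.es.get j).1) (ht : ∀ j, g j (Gs j).t = f (G.es.get j).2) :
    compV G Gs → T :=
  Quot.lift (Sum.elim f fun p => g p.1 p.2) <| by
    rintro _ _ ⟨j, ⟨rfl, rfl⟩ | ⟨rfl, rfl⟩⟩
    exacts [(hs j).symm, (ht j).symm]

@[elab_as_elim]
lemma compV.ind {p : compV G Gs → Prop} (inl : ∀ a, p (compInl G Gs a))
    (emb : ∀ j v, p (compEmb G Gs j v)) (q : compV G Gs) : p q := by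
  induction q using Quot.ind with
  | mk x => rcases x with a | ⟨j, v⟩; exacts [inl a, emb j v]

lemma compO_es_map {T : Type*} (f : (compO G Gs).V → T) :
    (compO G Gs).es.map (Prod.map f f) =
      (List.finRange G.es.length).flatMap fun j : Fin G.es.length =>
        (Gs j).es.map (Prod.map (f ∘ compEmb G Gs j) (f ∘ compEmb G Gs j)) := by
  simp only [compO, compBlock, List.map_flatMap, List.map_map]
  rfl

lemma mem_compO_es {e : compV G Gs × compV G Gs} :
    e ∈ (compO G Gs).es ↔
      ∃ j : Fin G.es.length, ∃ f ∈ (Gs j).es, e = (compEmb G Gs j f.1, compEmb G Gs j f.2) := by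
  show e ∈ (List.finRange G.es.length).flatMap (compBlock G Gs) ↔ _
  simp [compBlock, eq_comm]

end Substitution

theorem compO_unitO_left (G : OFG) : OIso (compO unitO fun _ => G) G := by
  have h0 : ∀ j : Fin unitO.es.length, j = ⟨0, Nat.one_pos⟩ :=
    fun j => Fin.ext (Nat.lt_one_iff.mp j.isLt)
  refine OIso.of_inverse
    (compV.lift (fun b : Bool => bif b then G.t else G.s) (fun _ v => v)
      (fun j => by rw [h0 j]; rfl) (fun j => by rw [h0 j]; rfl))
    (compEmb unitO (fun _ => G) ⟨0, Nat.one_pos⟩) (fun q => ?_) (fun _ => rfl) rfl rfl ?_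
  · induction q using compV.ind with
    | inl b => cases b; exacts [compEmb_s _, compEmb_t _]
    | emb j v => rw [h0 j]; rfl
  · refine Eq.trans ?_ (compO_es_map _).symm
    show G.es = (List.finRange 1).flatMap fun _ => G.es.map (Prod.map id id)
    simp [List.finRange_succ]

theorem compO_unitO_right (G : OFG) : OIso (compO G fun _ => unitO) G := by
  refine OIso.of_inverse
    (compV.lift id (fun j (b : Bool) => bif b then (G.es.get j).2 else (G.es.get j).1)
      (fun _ => rfl) (fun _ => rfl))
    (compInl G _) (fun q => ?_) (fun _ => rfl) rfl rfl ?_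
  · induction q using compV.ind with
    | inl a => rfl
    | emb j b => cases b; exacts [(compEmb_s j).symm, (compEmb_t j).symm]
  · refine Eq.trans ?_ (compO_es_map _).symm
    conv_lhs => rw [← List.map_get_finRange G.es, List.map_eq_flatMap]
    rfl

section EdgeIndex

variable {G : OFG} {Gs : ℕ → OFG}

lemma offsetO_succ (Gs : ℕ → OFG) (j : ℕ) :
    offsetO Gs (j + 1) = offsetO Gs j + (Gs j).es.length := by
  simp [offsetO, List.range_succ]

lemma offsetO_eq_sum_range (Gs : ℕ → OFG) (j : ℕ) :
    offsetO Gs j = ∑ k ∈ Finset.range j, (Gs k).es.length := by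
  induction j with
  | zero => rfl
  | succ j ih => rw [offsetO_succ, ih, Finset.sum_range_succ]

lemma range_offsetO (Gs : ℕ → OFG) (n : ℕ) :
    List.range (offsetO Gs n) =
      (List.range n).flatMap fun j => List.range' (offsetO Gs j) (Gs j).es.length := by
  induction n with
  | zero => rfl
  | succ n ih =>
    rw [offsetO_succ, List.range_add, ih, List.range_succ, List.flatMap_append]
    simp [List.range'_eq_map_range]

lemma length_compO_es : (compO G Gs).es.length = offsetO Gs G.es.length := by
  simp [compO, compBlock, List.length_flatMap, offsetO, ← List.map_coe_finRange_eq_range]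
  rfl

lemma offsetO_add_lt (j : Fin G.es.length) (i : Fin (Gs j).es.length) :
    offsetO Gs j + i < (compO G Gs).es.length := by
  rw [length_compO_es]
  calc offsetO Gs j + i < offsetO Gs (j + 1) := by rw [offsetO_succ]; omega
    _ ≤ offsetO Gs G.es.length := by
      rw [offsetO_eq_sum_range, offsetO_eq_sum_range]
      exact Finset.sum_le_sum_of_subset (Finset.range_subset_range.mpr j.isLt)

def compEdgePos (G : OFG) (Gs : ℕ → OFG) (p : Σ j : Fin G.es.length, Fin (Gs j).es.length) :
    Fin (compO G Gs).es.length :=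
  ⟨offsetO Gs p.1 + p.2, offsetO_add_lt p.1 p.2⟩

lemma finRange_length_compO_es :
    List.finRange (compO G Gs).es.length =
      (List.finRange G.es.length).flatMap fun j : Fin G.es.length =>
        (List.finRange (Gs j).es.length).map fun i => compEdgePos G Gs ⟨j, i⟩ := by
  refine List.map_injective_iff.mpr Fin.val_injective ?_
  rw [List.map_coe_finRange_eq_range]
  refine (congrArg List.range length_compO_es).trans ?_
  rw [range_offsetO, List.map_flatMap,
    ← List.map_coe_finRange_eq_range, List.flatMap_map]
  refine List.flatMap_congr fun j _ => ?_
  rw [List.map_map, List.range'_eq_map_range, ← List.map_coe_finRange_eq_range, List.map_map]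
  rfl

lemma compEdgePos_bijective : Function.Bijective (compEdgePos G Gs) := by
  refine (Fintype.bijective_iff_surjective_and_card _).mpr ⟨fun e => ?_, ?_⟩
  · have he := List.mem_finRange e
    rw [finRange_length_compO_es] at he
    simp only [List.mem_flatMap, List.mem_map] at he
    obtain ⟨j, -, i, -, hi⟩ := he
    exact ⟨⟨j, i⟩, hi⟩
  · simp [length_compO_es, offsetO_eq_sum_range, Fin.sum_univ_eq_sum_range
      (fun j => (Gs j).es.length)]

noncomputable def compEdgeIndex (G : OFG) (Gs : ℕ → OFG) :
    (Σ j : Fin G.es.length, Fin (Gs j).es.length) ≃ Fin (compO G Gs).es.length :=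
  Equiv.ofBijective _ compEdgePos_bijective

lemma flatMap_finRange_length_compO_es {α : Type*} (T : Fin (compO G Gs).es.length → List α) :
    (List.finRange (compO G Gs).es.length).flatMap T =
      (List.finRange G.es.length).flatMap fun j : Fin G.es.length =>
        (List.finRange (Gs j).es.length).flatMap fun i => T (compEdgeIndex G Gs ⟨j, i⟩) := by
  rw [finRange_length_compO_es, List.flatMap_assoc]
  simp only [List.flatMap_map]
  rfl

lemma compO_es_get_compEdgeIndex (p : Σ j : Fin G.es.length, Fin (Gs j).es.length) :
    (compO G Gs).es.get (compEdgeIndex G Gs p) =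
      (compEmb G Gs p.1 ((Gs p.1).es.get p.2).1, compEmb G Gs p.1 ((Gs p.1).es.get p.2).2) := by
  set edge : (Σ j : Fin G.es.length, Fin (Gs j).es.length) → compV G Gs × compV G Gs :=
    fun p => (compEmb G Gs p.1 ((Gs p.1).es.get p.2).1, compEmb G Gs p.1 ((Gs p.1).es.get p.2).2)
  have hes : (List.finRange _).map (compO G Gs).es.get =
      (List.finRange _).map (edge ∘ (compEdgeIndex G Gs).symm) := by
    rw [List.map_get_finRange, List.map_eq_flatMap, flatMap_finRange_length_compO_es]
    simp only [Function.comp_apply, Equiv.symm_apply_apply]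
    refine List.flatMap_congr fun j _ => ?_
    rw [← List.map_eq_flatMap]
    conv_lhs => rw [compBlock, ← List.map_get_finRange (Gs j).es, List.map_map]
    rfl
  rw [← List.ofFn_eq_map, ← List.ofFn_eq_map] at hes
  have hget := congrFun (List.ofFn_injective hes) (compEdgeIndex G Gs p)
  rwa [Function.comp_apply, Equiv.symm_apply_apply] at hget

end EdgeIndex

section Assoc

variable {G : OFG} {Gs Hs : ℕ → OFG}

abbrev assocInner (Gs Hs : ℕ → OFG) (j : ℕ) : OFG :=
  compO (Gs j) fun i => Hs (offsetO Gs j + i)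

def assocHomBase (G : OFG) (Gs Hs : ℕ → OFG) : compV G Gs → compV G (assocInner Gs Hs) :=
  compV.lift (compInl G _) (fun j v => compEmb G _ j (compInl (Gs j) _ v))
    (fun j => compEmb_s j) (fun j => compEmb_t j)

-- `piCongrLeft` transports along `compEdgeIndex` without casts between the fibres
-- `(Hs (compEdgeIndex G Gs ⟨j, i⟩)).V` and `(Hs (offsetO Gs j + i)).V`.
noncomputable def assocHomBlock (G : OFG) (Gs Hs : ℕ → OFG) :
    ∀ e : Fin (compO G Gs).es.length, (Hs e).V → compV G (assocInner Gs Hs) :=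
  Equiv.piCongrLeft (fun e : Fin (compO G Gs).es.length => (Hs e).V → compV G (assocInner Gs Hs))
    (compEdgeIndex G Gs) fun p w => compEmb G _ p.1 (compEmb (Gs p.1) _ p.2 w)

lemma assocHomBlock_compEdgeIndex (p : Σ j : Fin G.es.length, Fin (Gs j).es.length)
    (w : (Hs (compEdgeIndex G Gs p)).V) :
    assocHomBlock G Gs Hs (compEdgeIndex G Gs p) w =
      compEmb G (assocInner Gs Hs) p.1 (compEmb (Gs p.1) _ p.2 w) :=
  congrFun (Equiv.piCongrLeft_apply_apply
    (fun e : Fin (compO G Gs).es.length => (Hs e).V → compV G (assocInner Gs Hs)) _ _ p) w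

lemma assocHomBlock_s (e : Fin (compO G Gs).es.length) :
    assocHomBlock G Gs Hs e (Hs e).s = assocHomBase G Gs Hs ((compO G Gs).es.get e).1 := by
  obtain ⟨p, rfl⟩ := (compEdgeIndex G Gs).surjective e
  rw [assocHomBlock_compEdgeIndex, compO_es_get_compEdgeIndex]
  exact congrArg (compEmb G _ p.1) (compEmb_s p.2)

lemma assocHomBlock_t (e : Fin (compO G Gs).es.length) :
    assocHomBlock G Gs Hs e (Hs e).t = assocHomBase G Gs Hs ((compO G Gs).es.get e).2 := by
  obtain ⟨p, rfl⟩ := (compEdgeIndex G Gs).surjective e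
  rw [assocHomBlock_compEdgeIndex, compO_es_get_compEdgeIndex]
  exact congrArg (compEmb G _ p.1) (compEmb_t p.2)

noncomputable def assocHom (G : OFG) (Gs Hs : ℕ → OFG) :
    (compO (compO G Gs) Hs).V → (compO G (assocInner Gs Hs)).V :=
  compV.lift (assocHomBase G Gs Hs) (assocHomBlock G Gs Hs) assocHomBlock_s assocHomBlock_t

noncomputable def assocInv (G : OFG) (Gs Hs : ℕ → OFG) :
    compV G (assocInner Gs Hs) → compV (compO G Gs) Hs :=
  compV.lift (fun a => compInl _ Hs (compInl G Gs a))
    (fun j => compV.lift (fun v => compInl _ Hs (compEmb G Gs j v))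
      (fun i w => compEmb _ Hs (compEdgeIndex G Gs ⟨j, i⟩) w)
      (fun i => (compEmb_s _).trans
        (congrArg (compInl _ Hs ·.1) (compO_es_get_compEdgeIndex ⟨j, i⟩)))
      (fun i => (compEmb_t _).trans
        (congrArg (compInl _ Hs ·.2) (compO_es_get_compEdgeIndex ⟨j, i⟩))))
    (fun j => congrArg (compInl _ Hs) (compEmb_s j))
    (fun j => congrArg (compInl _ Hs) (compEmb_t j))

lemma assocInv_assocHom : Function.LeftInverse (assocInv G Gs Hs) (assocHom G Gs Hs) := by
  intro x
  induction x using compV.ind with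
  | inl q =>
    induction q using compV.ind with
    | inl a => rfl
    | emb j v => rfl
  | emb e w =>
    obtain ⟨p, rfl⟩ := (compEdgeIndex G Gs).surjective e
    exact congrArg (assocInv G Gs Hs) (assocHomBlock_compEdgeIndex p w)

lemma assocHom_assocInv : Function.RightInverse (assocInv G Gs Hs) (assocHom G Gs Hs) := by
  intro y
  induction y using compV.ind with
  | inl a => rfl
  | emb j q =>
    induction q using compV.ind with
    | inl v => rfl
    | emb i w => exact assocHomBlock_compEdgeIndex ⟨j, i⟩ w

lemma compO_assocInner_es :
    (compO G (assocInner Gs Hs)).es =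
      (compO (compO G Gs) Hs).es.map (Prod.map (assocHom G Gs Hs) (assocHom G Gs Hs)) := by
  show (List.finRange G.es.length).flatMap (fun j : Fin G.es.length =>
    (assocInner Gs Hs j).es.map (Prod.map (compEmb G _ j) (compEmb G _ j))) = _
  rw [compO_es_map, flatMap_finRange_length_compO_es]
  refine List.flatMap_congr fun j _ => ?_
  refine (compO_es_map (G := Gs j) (compEmb G (assocInner Gs Hs) j)).trans
    (List.flatMap_congr fun i _ => ?_)
  have hblock : assocHom G Gs Hs ∘ compEmb _ Hs (compEdgeIndex G Gs ⟨j, i⟩) =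
      compEmb G _ j ∘ compEmb (Gs j) (fun i => Hs (offsetO Gs j + i)) i :=
    funext (assocHomBlock_compEdgeIndex ⟨j, i⟩)
  rw [hblock]
  rfl

theorem compO_assoc (G : OFG) (Gs Hs : ℕ → OFG) :
    OIso (compO (compO G Gs) Hs)
      (compO G fun j => compO (Gs j) fun i => Hs (offsetO Gs j + i)) :=
  OIso.of_inverse (assocHom G Gs Hs) (assocInv G Gs Hs) assocInv_assocHom assocHom_assocInv
    rfl rfl compO_assocInner_es

end Assoc

lemma List.flatMap_range_dite {α : Type*} (n : ℕ) (F : Fin n → List α) :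
    (List.range n).flatMap (fun j => if h : j < n then F ⟨j, h⟩ else []) =
      (List.finRange n).flatMap F := by
  rw [← List.map_coe_finRange_eq_range, List.flatMap_map]
  exact List.flatMap_congr fun j _ => dif_pos j.isLt

lemma List.flatMap_finRange_cast {α : Type*} {m n : ℕ} (h : m = n) (F : Fin n → List α) :
    (List.finRange m).flatMap (fun j => F (Fin.cast h j)) = (List.finRange n).flatMap F := by
  subst h
  rfl

section Perm

variable {G : OFG} {Gs : ℕ → OFG} {σ : Equiv.Perm (Fin G.es.length)}

lemma length_permO_es (G : OFG) (σ : Equiv.Perm (Fin G.es.length)) :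
    (permO G σ).es.length = G.es.length :=
  List.length_ofFn

def permIndex (σ : Equiv.Perm (Fin G.es.length)) (j : ℕ) : ℕ :=
  if h : j < G.es.length then σ ⟨j, h⟩ else j

lemma permIndex_eq (j : Fin (permO G σ).es.length) :
    permIndex σ j = σ (Fin.cast (length_permO_es G σ) j) :=
  dif_pos (length_permO_es G σ ▸ j.isLt)

/-- Its values are definitionally `permIndex σ j`, so that the vertex types of the graphs
substituted into `permO G σ` and into `G` agree on the nose. -/
def permIndexFin (σ : Equiv.Perm (Fin G.es.length)) (j : Fin (permO G σ).es.length) :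
    Fin G.es.length :=
  ⟨permIndex σ j, permIndex_eq j ▸ (σ _).isLt⟩

lemma permIndexFin_eq : permIndexFin σ = σ ∘ Fin.cast (length_permO_es G σ) :=
  funext fun j => Fin.ext (permIndex_eq j)

noncomputable def permIndexEquiv (σ : Equiv.Perm (Fin G.es.length)) :
    Fin (permO G σ).es.length ≃ Fin G.es.length :=
  Equiv.ofBijective (permIndexFin σ)
    (permIndexFin_eq ▸ σ.bijective.comp (finCongr (length_permO_es G σ)).bijective)

lemma permO_es_get (j : Fin (permO G σ).es.length) :
    (permO G σ).es.get j = G.es.get (permIndexEquiv σ j) :=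
  (List.get_ofFn _ j).trans (congrArg G.es.get (congrFun permIndexFin_eq j).symm)

noncomputable def permHom (Gs : ℕ → OFG) (σ : Equiv.Perm (Fin G.es.length)) :
    compV (permO G σ) (fun j => Gs (permIndex σ j)) → compV G Gs :=
  compV.lift (compInl G Gs) (fun j v => compEmb G Gs (permIndexEquiv σ j) v)
    (fun j => (compEmb_s _).trans (congrArg (compInl G Gs ·.1) (permO_es_get j).symm))
    (fun j => (compEmb_t _).trans (congrArg (compInl G Gs ·.2) (permO_es_get j).symm))

noncomputable def permInvBlock (Gs : ℕ → OFG) (σ : Equiv.Perm (Fin G.es.length)) :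
    ∀ i : Fin G.es.length, (Gs i).V → compV (permO G σ) (fun j => Gs (permIndex σ j)) :=
  Equiv.piCongrLeft (fun i : Fin G.es.length => (Gs i).V → compV _ _) (permIndexEquiv σ)
    (compEmb (permO G σ) fun j => Gs (permIndex σ j))

lemma permInvBlock_permIndexEquiv (j : Fin (permO G σ).es.length)
    (v : (Gs (permIndex σ j)).V) :
    permInvBlock Gs σ (permIndexEquiv σ j) v = compEmb _ (fun j => Gs (permIndex σ j)) j v :=
  congrFun (Equiv.piCongrLeft_apply_apply
    (fun i : Fin G.es.length => (Gs i).V → compV (permO G σ) fun j => Gs (permIndex σ j))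
    (permIndexEquiv σ) (compEmb (permO G σ) fun j => Gs (permIndex σ j)) j) v

lemma permInvBlock_s (i : Fin G.es.length) :
    permInvBlock Gs σ i (Gs i).s = compInl (permO G σ) _ (G.es.get i).1 := by
  obtain ⟨j, rfl⟩ := (permIndexEquiv σ).surjective i
  exact (permInvBlock_permIndexEquiv j _).trans
    ((compEmb_s j).trans (congrArg (compInl _ _ ·.1) (permO_es_get j)))

lemma permInvBlock_t (i : Fin G.es.length) :
    permInvBlock Gs σ i (Gs i).t = compInl (permO G σ) _ (G.es.get i).2 := by
  obtain ⟨j, rfl⟩ := (permIndexEquiv σ).surjective i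
  exact (permInvBlock_permIndexEquiv j _).trans
    ((compEmb_t j).trans (congrArg (compInl _ _ ·.2) (permO_es_get j)))

noncomputable def permInv (Gs : ℕ → OFG) (σ : Equiv.Perm (Fin G.es.length)) :
    compV G Gs → compV (permO G σ) (fun j => Gs (permIndex σ j)) :=
  compV.lift (compInl (permO G σ) _) (permInvBlock Gs σ) permInvBlock_s permInvBlock_t

theorem compO_permO (G : OFG) (Gs : ℕ → OFG) (σ : Equiv.Perm (Fin G.es.length)) :
    OIso
      (compO (permO G σ)
        (fun j => if h : j < G.es.length then Gs ((σ ⟨j, h⟩ : Fin G.es.length) : ℕ)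
          else Gs j))
      ⟨compV G Gs, (compO G Gs).s, (compO G Gs).t,
        (List.range G.es.length).flatMap (fun j =>
          if h : j < G.es.length then compBlock G Gs (σ ⟨j, h⟩) else [])⟩ := by
  rw [show (fun j => if h : j < G.es.length then Gs (σ ⟨j, h⟩) else Gs j) =
    fun j => Gs (permIndex σ j) from funext fun j => (apply_dite Gs _ _ _).symm]
  refine OIso.of_inverse (permHom Gs σ) (permInv Gs σ) (fun x => ?_) (fun y => ?_) rfl rfl ?_
  · induction x using compV.ind with
    | inl a => rfl
    | emb j v => exact permInvBlock_permIndexEquiv j v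
  · induction y using compV.ind with
    | inl a => rfl
    | emb i w =>
      obtain ⟨j, rfl⟩ := (permIndexEquiv σ).surjective i
      exact congrArg (permHom Gs σ) (permInvBlock_permIndexEquiv j w)
  · show (List.range G.es.length).flatMap _ = _
    refine (List.flatMap_range_dite _ fun i => compBlock G Gs (σ i)).trans
      ((List.flatMap_finRange_cast (length_permO_es G σ) _).symm.trans
        (Eq.trans ?_ (compO_es_map (permHom Gs σ)).symm))
    exact List.flatMap_congr fun j _ => congrArg (compBlock G Gs) (congrFun permIndexFin_eq j).symm

end Perm

section Paths

variable {α : Type*} {r : α → α → Prop} {a b : α} {e : α × α}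

open Relation

lemma List.reflTransGen_of_isChain_of_mem_zip_tail {p : List α} (hp : p.IsChain r)
    (ha : p.head? = some a) (hb : p.getLast? = some b) (he : e ∈ p.zip p.tail) :
    ReflTransGen r a e.1 ∧ r e.1 e.2 ∧ ReflTransGen r e.2 b := by
  induction p generalizing a with
  | nil => simp at he
  | cons c q ih =>
    cases q with
    | nil => simp at he
    | cons d q =>
      obtain rfl : c = a := Option.some.inj ha
      obtain ⟨hcd, hp⟩ := List.isChain_cons_cons.mp hp
      rw [List.getLast?_cons_cons] at hb
      rcases List.mem_cons.mp he with rfl | he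
      · refine ⟨.refl, hcd, List.relationReflTransGen_of_exists_isChain_cons q hp ?_⟩
        exact Option.some.inj ((List.getLast?_eq_some_getLast _).symm.trans hb)
      · obtain ⟨h₁, h₂, h₃⟩ := ih hp rfl hb he
        exact ⟨h₁.head hcd, h₂, h₃⟩

lemma List.exists_isChain_mem_zip_tail (h₁ : ReflTransGen r a e.1) (h₂ : r e.1 e.2)
    (h₃ : ReflTransGen r e.2 b) :
    ∃ p : List α, p.head? = some a ∧ p.getLast? = some b ∧ p.IsChain r ∧ e ∈ p.zip p.tail := by
  obtain ⟨l, hl, hlast⟩ := List.exists_isChain_cons_of_relationReflTransGen h₃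
  induction h₁ using ReflTransGen.head_induction_on with
  | refl =>
    refine ⟨e.1 :: e.2 :: l, rfl, ?_, hl.cons_cons h₂, by simp⟩
    rw [List.getLast?_cons_cons, List.getLast?_eq_some_getLast (List.cons_ne_nil _ _), hlast]
  | head hac _ ih =>
    obtain ⟨p, hpa, hpb, hpc, hpe⟩ := ih
    obtain ⟨p, rfl⟩ := List.head?_eq_some_iff.mp hpa
    exact ⟨_ :: _ :: p, rfl, List.getLast?_cons_cons.trans hpb, hpc.cons_cons hac,
      List.mem_cons_of_mem _ hpe⟩

end Paths

lemma existsUnique_sigma {ι : Type*} {β : ι → Type*} {P : ι → Prop} {Q : ∀ i, β i → Prop}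
    (hP : ∃! i, P i) (hQ : ∀ i, P i → ∃! b, Q i b) : ∃! x : Σ i, β i, Q x.1 x.2 ∧ P x.1 := by
  obtain ⟨i, hi, hiu⟩ := hP
  obtain ⟨b, hb, hbu⟩ := hQ i hi
  refine ⟨⟨i, b⟩, ⟨hb, hi⟩, ?_⟩
  rintro ⟨i', b'⟩ ⟨hb', hi'⟩
  obtain rfl := hiu i' hi'
  rw [hbu b' hb']

def OFG.Reachable (G : OFG) : G.V → G.V → Prop :=
  Relation.ReflTransGen fun a b => (a, b) ∈ G.es

section Flow

variable {G : OFG} {Gs : ℕ → OFG}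

lemma IsFlowO.s_ne_t (hG : IsFlowO G) : G.s ≠ G.t := by
  obtain ⟨i, hi, -⟩ := hG.2.2.1
  exact fun h => hG.2.1 _ (List.get_mem _ _) (hi.trans h)

lemma IsFlowO.reachable_of_mem (hG : IsFlowO G) {e : G.V × G.V} (he : e ∈ G.es) :
    G.Reachable G.s e.1 ∧ G.Reachable e.2 G.t := by
  obtain ⟨p, hpa, hpb, hpc, hpe⟩ := hG.2.2.2.2 e he
  obtain ⟨h₁, -, h₃⟩ := List.reflTransGen_of_isChain_of_mem_zip_tail hpc hpa hpb hpe
  exact ⟨h₁, h₃⟩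

lemma IsFlowO.reachable_s_t (hG : IsFlowO G) : G.Reachable G.s G.t := by
  obtain ⟨i, -⟩ := hG.2.2.1
  obtain ⟨h₁, h₃⟩ := hG.reachable_of_mem (List.get_mem G.es i)
  exact h₁.trans (.head (List.get_mem G.es i) h₃)

lemma reachable_compEmb (j : Fin G.es.length) {u v : (Gs j).V} (h : (Gs j).Reachable u v) :
    (compO G Gs).Reachable (compEmb G Gs j u) (compEmb G Gs j v) :=
  Relation.ReflTransGen.lift _ (fun a b hab => mem_compO_es.mpr ⟨j, (a, b), hab, rfl⟩) _ _ h

lemma reachable_compInl (hGs : ∀ j : Fin G.es.length, (Gs j).Reachable (Gs j).s (Gs j).t)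
    {a b : G.V} (h : G.Reachable a b) :
    (compO G Gs).Reachable (compInl G Gs a) (compInl G Gs b) := by
  refine Relation.ReflTransGen.lift' _ (fun a b hab => ?_) _ _ h
  obtain ⟨j, hj⟩ := List.mem_iff_get.mp hab
  have hreach := reachable_compEmb j (hGs j)
  rwa [compEmb_s, compEmb_t, hj] at hreach

lemma compEmb_eq_compInl_s_iff (hG : ∀ e ∈ G.es, e.2 ≠ G.s)
    (hGs : ∀ j : Fin G.es.length, (Gs j).t ≠ (Gs j).s) {j : Fin G.es.length} {v : (Gs j).V} :
    compEmb G Gs j v = compInl G Gs G.s ↔ v = (Gs j).s ∧ (G.es.get j).1 = G.s := by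
  let atSource : compV G Gs → Prop :=
    compV.lift (· = G.s) (fun j v => v = (Gs j).s ∧ (G.es.get j).1 = G.s)
      (fun j => propext (and_iff_right rfl))
      (fun j => propext (iff_of_false (fun h => hGs j h.1) (hG _ (List.get_mem _ _))))
  refine ⟨fun h => (congrArg atSource h).mpr rfl, ?_⟩
  rintro ⟨rfl, h⟩
  rw [compEmb_s, h]

lemma compEmb_eq_compInl_t_iff (hG : ∀ e ∈ G.es, e.1 ≠ G.t)
    (hGs : ∀ j : Fin G.es.length, (Gs j).s ≠ (Gs j).t) {j : Fin G.es.length} {v : (Gs j).V} :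
    compEmb G Gs j v = compInl G Gs G.t ↔ v = (Gs j).t ∧ (G.es.get j).2 = G.t := by
  let atTarget : compV G Gs → Prop :=
    compV.lift (· = G.t) (fun j v => v = (Gs j).t ∧ (G.es.get j).2 = G.t)
      (fun j => propext (iff_of_false (fun h => hGs j h.1) (hG _ (List.get_mem _ _))))
      (fun j => propext (and_iff_right rfl))
  refine ⟨fun h => (congrArg atTarget h).mpr rfl, ?_⟩
  rintro ⟨rfl, h⟩
  rw [compEmb_t, h]

theorem IsFlowO.compO (hG : IsFlowO G) (hGs : ∀ j < G.es.length, IsFlowO (Gs j)) :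
    IsFlowO (compO G Gs) := by
  have hGs' (j : Fin G.es.length) : IsFlowO (Gs j) := hGs j j.isLt
  have hs_iff := @compEmb_eq_compInl_s_iff G Gs hG.1 fun j => (hGs' j).s_ne_t.symm
  have ht_iff := @compEmb_eq_compInl_t_iff G Gs hG.2.1 fun j => (hGs' j).s_ne_t
  refine ⟨?_, ?_, ?_, ?_, ?_⟩
  · rintro _ he h
    obtain ⟨j, f, hf, rfl⟩ := mem_compO_es.mp he
    exact (hGs' j).1 f hf (hs_iff.mp h).1
  · rintro _ he h
    obtain ⟨j, f, hf, rfl⟩ := mem_compO_es.mp he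
    exact (hGs' j).2.1 f hf (ht_iff.mp h).1
  · refine (compEdgeIndex G Gs).existsUnique_congr_right.mp ((existsUnique_congr fun p => ?_).mp
      (existsUnique_sigma hG.2.2.1 fun j _ => (hGs' j).2.2.1))
    rw [compO_es_get_compEdgeIndex]
    exact hs_iff.symm
  · refine (compEdgeIndex G Gs).existsUnique_congr_right.mp ((existsUnique_congr fun p => ?_).mp
      (existsUnique_sigma hG.2.2.2.1 fun j _ => (hGs' j).2.2.2.1))
    rw [compO_es_get_compEdgeIndex]
    exact ht_iff.symm
  · intro e he
    obtain ⟨j, f, hf, rfl⟩ := mem_compO_es.mp he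
    have hreach (k : Fin G.es.length) := (hGs' k).reachable_s_t
    obtain ⟨hGj₁, hGj₂⟩ := hG.reachable_of_mem (List.get_mem G.es j)
    obtain ⟨hf₁, hf₂⟩ := (hGs' j).reachable_of_mem hf
    refine List.exists_isChain_mem_zip_tail ?_ (mem_compO_es.mpr ⟨j, f, hf, rfl⟩) ?_
    · refine (reachable_compInl hreach hGj₁).trans ?_
      rw [← compEmb_s]
      exact reachable_compEmb j hf₁
    · refine Relation.ReflTransGen.trans ?_ (reachable_compInl hreach hGj₂)
      rw [← compEmb_t]
      exact reachable_compEmb j hf₂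

end Flow

/-- Flow graphs with linearly ordered edges form a symmetric operad in `Set` under
substitution, with unit the single-edge flow graph: flow graphs are closed under
substitution, substitution is unital and associative, and it is equivariant with respect
to permutations of the ordered edges (the right-hand side being the blockwise-permuted
substituted graph). -/
theorem stmt17 :
    (∀ (G : OFG) (Gs : ℕ → OFG), IsFlowO G → (∀ j < G.es.length, IsFlowO (Gs j)) →
      IsFlowO (compO G Gs)) ∧
    (∀ G : OFG, OIso (compO unitO (fun _ => G)) G) ∧
    (∀ G : OFG, OIso (compO G (fun _ => unitO)) G) ∧
    (∀ (G : OFG) (Gs Hs : ℕ → OFG),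
      OIso (compO (compO G Gs) Hs)
        (compO G (fun j => compO (Gs j) (fun i => Hs (offsetO Gs j + i))))) ∧
    (∀ (G : OFG) (Gs : ℕ → OFG) (σ : Equiv.Perm (Fin G.es.length)),
      OIso
        (compO (permO G σ)
          (fun j => if h : j < G.es.length then Gs ((σ ⟨j, h⟩ : Fin G.es.length) : ℕ)
            else Gs j))
        ⟨compV G Gs, (compO G Gs).s, (compO G Gs).t,
          (List.range G.es.length).flatMap (fun j =>
            if h : j < G.es.length then
              compBlock G Gs (σ ⟨j, h⟩)
            else [])⟩) :=
  ⟨fun _ _ hG hGs => hG.compO hGs, compO_unitO_left, compO_unitO_right, compO_assoc,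
    compO_permO⟩
end
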